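/- arXiv:math/0510403 — 3 statements merged into one kernel-verified Lean document; each statement's English description precedes it below -/
import Mathlib

section
/- Let F be holomorphic on the open unit disc with power series F(z) = Σ_{n≥0} c(n) zⁿ where c(n) → 0. Suppose there is a closed set K ⊂ ∂𝔻 of measure zero and a bounded measurable function f on ∂𝔻 such that F(re^{it}) → f(t) uniformly on every closed arc of the complement of K. If f ∉ H², then the series Σ_{n≥0} c(n)e^{int} − Σ_n f̂(n)e^{int} is a nontrivial trigonometric series converging to zero at every point of the complement of K. -/
open MeasureTheory Filter
open scoped Real

noncomputable section

instance : Fact (0 < 2 * π) := ⟨by positivity⟩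

namespace NullSeries

/-- fourier as complex exponential, for period 2π. -/
lemma fourier_eq_exp (n : ℤ) (x : ℝ) :
    (fourier n (x : AddCircle (2 * π)) : ℂ) = Complex.exp (n * x * Complex.I) := by
  rw [fourier_coe_apply]
  congr 1
  have h2 : ((2 * π : ℝ) : ℂ) ≠ 0 := by
    simp only [ne_eq, Complex.ofReal_eq_zero]
    positivity
  rw [div_eq_iff h2]
  push_cast
  ring

lemma norm_fourier (T : ℝ) (n : ℤ) (x : AddCircle T) : ‖(fourier n x : ℂ)‖ = 1 := by
  rw [fourier_apply]
  exact Circle.norm_coe _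

/-- tail sup function for a cofinitely vanishing bounded sequence. -/
lemma exists_tail_sup {d : ℤ → ℂ} {D : ℝ} (hD : ∀ k, ‖d k‖ ≤ D)
    (hd : Tendsto d cofinite (nhds 0)) :
    ∃ ε : ℕ → ℝ, Tendsto ε atTop (nhds 0) ∧ (∀ j, 0 ≤ ε j ∧ ε j ≤ D) ∧
      ∀ (j : ℕ) (k : ℤ), (j : ℤ) ≤ |k| → ‖d k‖ ≤ ε j := by
  classical
  set S : ℕ → Set ℝ := fun j => (fun k => ‖d k‖) '' {k : ℤ | (j : ℤ) ≤ |k|} with hS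
  have hne : ∀ j, (S j).Nonempty := fun j => ⟨‖d j‖, ⟨(j : ℤ), by simp, rfl⟩⟩
  have hbdd : ∀ j, BddAbove (S j) := by
    intro j
    refine ⟨D, ?_⟩
    rintro x ⟨k, _, rfl⟩
    exact hD k
  set ε : ℕ → ℝ := fun j => sSup (S j) with hε
  have hmem : ∀ (j : ℕ) (k : ℤ), (j : ℤ) ≤ |k| → ‖d k‖ ≤ ε j :=
    fun j k hk => le_csSup (hbdd j) ⟨k, hk, rfl⟩
  have h0 : ∀ j, 0 ≤ ε j := fun j => le_trans (norm_nonneg _) (hmem j j (by simp))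
  have hDj : ∀ j, ε j ≤ D := by
    intro j
    apply csSup_le (hne j)
    rintro x ⟨k, _, rfl⟩
    exact hD k
  refine ⟨ε, ?_, fun j => ⟨h0 j, hDj j⟩, hmem⟩
  rw [Metric.tendsto_atTop]
  intro η hη
  have hfin : {k : ℤ | ¬ ‖d k‖ < η / 2}.Finite := by
    have h2 := Filter.eventually_cofinite.mp (hd (Metric.ball_mem_nhds (0 : ℂ)
      (by positivity : (0:ℝ) < η / 2)))
    apply h2.subset
    intro k hk
    simpa [Metric.mem_ball, dist_zero_right] using hk
  obtain ⟨j₀, hj₀⟩ : ∃ j₀ : ℕ, ∀ k : ℤ, ¬ ‖d k‖ < η / 2 → k.natAbs < j₀ := by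
    refine ⟨(hfin.toFinset.sup fun k => k.natAbs) + 1, fun k hk => ?_⟩
    have hmem' : k ∈ hfin.toFinset := by simpa using hk
    exact Nat.lt_succ_of_le (Finset.le_sup hmem')
  refine ⟨j₀, fun j hj => ?_⟩
  have hle : ε j ≤ η / 2 := by
    apply csSup_le (hne j)
    rintro x ⟨k, hk, rfl⟩
    by_contra h
    push_neg at h
    have hk2 : ¬ ‖d k‖ < η / 2 := by linarith
    have h1 := hj₀ k hk2
    have h2 : (j : ℤ) ≤ |k| := hk
    have h3 : |k| = (k.natAbs : ℤ) := Int.abs_eq_natAbs k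
    have h4 : (j₀ : ℤ) ≤ (j : ℤ) := by exact_mod_cast hj
    omega
  rw [Real.dist_eq, abs_of_nonneg (by simpa using h0 j)]
  simpa using lt_of_le_of_lt hle (by linarith)

/-- Cardinality and membership facts about symmetric differences of shifted intervals. -/
lemma sdiff_card (N : ℕ) (m : ℤ) :
    ((Finset.Icc (-(N:ℤ)) N) \ (Finset.Icc (-(N:ℤ) - m) ((N:ℤ) - m))).card ≤ m.natAbs := by
  classical
  rcases le_or_gt 0 m with hm | hm
  · have hsub : (Finset.Icc (-(N:ℤ)) N) \ (Finset.Icc (-(N:ℤ) - m) ((N:ℤ) - m)) ⊆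
        Finset.Icc ((N:ℤ) - m + 1) N := by
      intro k hk
      simp only [Finset.mem_sdiff, Finset.mem_Icc, not_and, not_le] at hk
      simp only [Finset.mem_Icc]
      omega
    calc _ ≤ (Finset.Icc ((N:ℤ) - m + 1) N).card := Finset.card_le_card hsub
    _ ≤ m.natAbs := by rw [Int.card_Icc]; omega
  · have hsub : (Finset.Icc (-(N:ℤ)) N) \ (Finset.Icc (-(N:ℤ) - m) ((N:ℤ) - m)) ⊆
        Finset.Icc (-(N:ℤ)) (-(N:ℤ) - m - 1) := by
      intro k hk
      simp only [Finset.mem_sdiff, Finset.mem_Icc, not_and, not_le] at hk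
      simp only [Finset.mem_Icc]
      omega
    calc _ ≤ (Finset.Icc (-(N:ℤ)) (-(N:ℤ) - m - 1)).card := Finset.card_le_card hsub
    _ ≤ m.natAbs := by rw [Int.card_Icc]; omega

lemma sdiff_card' (N : ℕ) (m : ℤ) :
    ((Finset.Icc (-(N:ℤ) - m) ((N:ℤ) - m)) \ (Finset.Icc (-(N:ℤ)) N)).card ≤ m.natAbs := by
  classical
  rw [Finset.card_sdiff_comm (by rw [Int.card_Icc, Int.card_Icc]; omega)]
  exact sdiff_card N m

lemma sdiff_mem (N : ℕ) (m : ℤ) (k : ℤ)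
    (hk : k ∈ (Finset.Icc (-(N:ℤ)) N) \ (Finset.Icc (-(N:ℤ) - m) ((N:ℤ) - m))) :
    (N : ℤ) < |k| + |m| := by
  simp only [Finset.mem_sdiff, Finset.mem_Icc, not_and, not_le] at hk
  rcases abs_cases k with ⟨h1, _⟩ | ⟨h1, _⟩ <;> rcases abs_cases m with ⟨h2, _⟩ | ⟨h2, _⟩ <;> omega

lemma sdiff_mem' (N : ℕ) (m : ℤ) (k : ℤ)
    (hk : k ∈ (Finset.Icc (-(N:ℤ) - m) ((N:ℤ) - m)) \ (Finset.Icc (-(N:ℤ)) N)) :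
    (N : ℤ) < |k| + |m| := by
  simp only [Finset.mem_sdiff, Finset.mem_Icc, not_and, not_le] at hk
  rcases abs_cases k with ⟨h1, _⟩ | ⟨h1, _⟩ <;> rcases abs_cases m with ⟨h2, _⟩ | ⟨h2, _⟩ <;> omega


/-- One integration-by-parts step for Fourier coefficients on `[a, a+2π]` of a function
vanishing at the endpoints. -/
lemma ibp_step {a : ℝ} (hab : a < a + 2 * π) {g g' : ℝ → ℂ}
    (hg : ∀ x, HasDerivAt g (g' x) x) (hg'c : Continuous g')
    (hga : g a = 0) (hgb : g (a + 2 * π) = 0) {n : ℤ} (hn : n ≠ 0) :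
    ‖fourierCoeffOn hab g n‖ = ‖fourierCoeffOn hab g' n‖ / |(n : ℝ)| := by
  have hπ : (π : ℂ) ≠ 0 := Complex.ofReal_ne_zero.mpr Real.pi_ne_zero
  have hn' : (n : ℂ) ≠ 0 := Int.cast_ne_zero.mpr hn
  have key : fourierCoeffOn hab g n = 1 / (Complex.I * n) * fourierCoeffOn hab g' n := by
    rw [fourierCoeffOn_of_hasDerivAt hab hn (fun x _ => hg x)
      (hg'c.intervalIntegrable _ _), hga, hgb]
    push_cast
    field_simp [Complex.I_ne_zero]
    try ring
  rw [key, norm_mul, norm_div, norm_one, norm_mul, Complex.norm_I, one_mul]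
  have h3 : ‖(n : ℂ)‖ = |(n : ℝ)| := by
    rw [Complex.norm_intCast]
    try (push_cast; rfl)
  rw [h3]
  ring

lemma coeffOn_bound {a b : ℝ} (hab : a < b) {g : ℝ → ℂ} {B : ℝ}
    (hB : ∀ x ∈ Set.Icc a b, ‖g x‖ ≤ B) (n : ℤ) :
    ‖fourierCoeffOn hab g n‖ ≤ B := by
  rw [fourierCoeffOn_eq_integral, norm_smul]
  have h1 : ‖∫ x in a..b, fourier (-n) (x : AddCircle (b - a)) • g x‖ ≤ B * |b - a| := by
    apply intervalIntegral.norm_integral_le_of_norm_le_const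
    intro x hx
    rw [norm_smul, norm_fourier, one_mul]
    apply hB
    rw [Set.uIoc_of_le hab.le] at hx
    exact ⟨hx.1.le, hx.2⟩
  have hba : (0:ℝ) < b - a := by linarith
  calc ‖(1 / (b - a) : ℝ)‖ * ‖∫ x in a..b, fourier (-n) (x : AddCircle (b - a)) • g x‖
      ≤ ‖(1 / (b - a) : ℝ)‖ * (B * |b - a|) := by
        apply mul_le_mul_of_nonneg_left h1 (norm_nonneg _)
    _ = B := by
        rw [Real.norm_eq_abs, abs_of_pos (by positivity), abs_of_pos hba]
        field_simp

/-- Cubic decay of the Fourier coefficients of a smooth bump supported inside the period. -/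
lemma bump_decay (t₀ : ℝ) (φ : ContDiffBump t₀) (hφ : φ.rOut < π) :
    ∃ C : ℝ, 0 ≤ C ∧ ∀ n : ℤ, n ≠ 0 →
      ‖fourierCoeff (AddCircle.liftIco (2*π) (t₀ - π) (fun x => ((φ x : ℝ) : ℂ))) n‖
        ≤ C / |(n : ℝ)| ^ 3 := by
  have hπ := Real.pi_pos
  set a := t₀ - π with ha
  have hab : a < a + 2 * π := by simp [ha]; linarith
  set p1 : ℝ → ℝ := deriv (⇑φ) with hp1
  set p2 : ℝ → ℝ := deriv p1 with hp2
  set p3 : ℝ → ℝ := deriv p2 with hp3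
  have hc0 : ContDiff ℝ ((⊤:ℕ∞):WithTop ℕ∞) (⇑φ) := φ.contDiff
  have hc1 : ContDiff ℝ ((⊤:ℕ∞):WithTop ℕ∞) p1 := (contDiff_infty_iff_deriv.mp hc0).2
  have hc2 : ContDiff ℝ ((⊤:ℕ∞):WithTop ℕ∞) p2 := (contDiff_infty_iff_deriv.mp hc1).2
  have hc3 : ContDiff ℝ ((⊤:ℕ∞):WithTop ℕ∞) p3 := (contDiff_infty_iff_deriv.mp hc2).2
  -- supports
  have hs0 : Function.support (⇑φ) ⊆ Metric.closedBall t₀ φ.rOut := by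
    rw [← φ.tsupport_eq]; exact subset_tsupport _
  have hs1 : Function.support p1 ⊆ Metric.closedBall t₀ φ.rOut := by
    rw [← φ.tsupport_eq]; exact support_deriv_subset
  have hts1 : tsupport p1 ⊆ Metric.closedBall t₀ φ.rOut :=
    closure_minimal hs1 Metric.isClosed_closedBall
  have hs2 : Function.support p2 ⊆ Metric.closedBall t₀ φ.rOut :=
    support_deriv_subset.trans hts1
  have hts2 : tsupport p2 ⊆ Metric.closedBall t₀ φ.rOut :=
    closure_minimal hs2 Metric.isClosed_closedBall
  have hs3 : Function.support p3 ⊆ Metric.closedBall t₀ φ.rOut :=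
    support_deriv_subset.trans hts2
  have hnb : ∀ {h : ℝ → ℝ}, Function.support h ⊆ Metric.closedBall t₀ φ.rOut →
      h a = 0 ∧ h (a + 2 * π) = 0 := by
    intro h hsupp
    constructor
    · by_contra hne
      have := hsupp (Function.mem_support.mpr hne)
      rw [Metric.mem_closedBall, Real.dist_eq, ha] at this
      have : |t₀ - π - t₀| ≤ φ.rOut := this
      rw [show t₀ - π - t₀ = -π by ring, abs_neg, abs_of_pos hπ] at this
      linarith
    · by_contra hne
      have := hsupp (Function.mem_support.mpr hne)
      rw [Metric.mem_closedBall, Real.dist_eq, ha] at this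
      have : |t₀ - π + 2*π - t₀| ≤ φ.rOut := this
      rw [show t₀ - π + 2*π - t₀ = π by ring, abs_of_pos hπ] at this
      linarith
  -- complex casts
  set g0 : ℝ → ℂ := fun x => ((φ x : ℝ) : ℂ) with hg0
  set g1 : ℝ → ℂ := fun x => ((p1 x : ℝ) : ℂ) with hg1
  set g2 : ℝ → ℂ := fun x => ((p2 x : ℝ) : ℂ) with hg2
  set g3 : ℝ → ℂ := fun x => ((p3 x : ℝ) : ℂ) with hg3
  have hd0 : ∀ x, HasDerivAt g0 (g1 x) x := fun x =>
    ((hc0.differentiable (by simp)).differentiableAt.hasDerivAt).ofReal_comp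
  have hd1 : ∀ x, HasDerivAt g1 (g2 x) x := fun x =>
    ((hc1.differentiable (by simp)).differentiableAt.hasDerivAt).ofReal_comp
  have hd2 : ∀ x, HasDerivAt g2 (g3 x) x := fun x =>
    ((hc2.differentiable (by simp)).differentiableAt.hasDerivAt).ofReal_comp
  have hcg1 : Continuous g1 := Complex.continuous_ofReal.comp hc1.continuous
  have hcg2 : Continuous g2 := Complex.continuous_ofReal.comp hc2.continuous
  have hcg3 : Continuous g3 := Complex.continuous_ofReal.comp hc3.continuous
  -- bound for third derivative
  obtain ⟨B, hB⟩ := (isCompact_Icc (a := a) (b := a + 2*π)).exists_bound_of_continuousOn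
    hcg3.continuousOn
  refine ⟨max B 0, le_max_right _ _, fun n hn => ?_⟩
  have hn1 : (1:ℝ) ≤ |(n : ℝ)| := by
    have := Int.one_le_abs (show n ≠ 0 from hn)
    calc (1:ℝ) = ((1:ℤ):ℝ) := by norm_num
    _ ≤ ((|n| : ℤ) : ℝ) := by exact_mod_cast this
    _ = |(n:ℝ)| := by push_cast; rfl
  have hnpos : (0:ℝ) < |(n:ℝ)| := by linarith
  rw [fourierCoeff_liftIco_eq]
  have e0 : ‖fourierCoeffOn hab g0 n‖ = ‖fourierCoeffOn hab g1 n‖ / |(n:ℝ)| :=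
    ibp_step hab hd0 hcg1 (by simp [hg0, (hnb hs0).1]) (by simp [hg0, (hnb hs0).2]) hn
  have e1 : ‖fourierCoeffOn hab g1 n‖ = ‖fourierCoeffOn hab g2 n‖ / |(n:ℝ)| :=
    ibp_step hab hd1 hcg2 (by simp [hg1, (hnb hs1).1]) (by simp [hg1, (hnb hs1).2]) hn
  have e2 : ‖fourierCoeffOn hab g2 n‖ = ‖fourierCoeffOn hab g3 n‖ / |(n:ℝ)| :=
    ibp_step hab hd2 hcg3 (by simp [hg2, (hnb hs2).1]) (by simp [hg2, (hnb hs2).2]) hn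
  have e3 : ‖fourierCoeffOn hab g3 n‖ ≤ max B 0 :=
    coeffOn_bound hab (fun x hx => (hB x hx).trans (le_max_left _ _)) n
  have : ‖fourierCoeffOn hab g0 n‖ = ‖fourierCoeffOn hab g3 n‖ / |(n:ℝ)|^3 := by
    rw [e2] at e1
    rw [e1] at e0
    rw [e0, div_div, div_div]
    congr 1
    ring
  rw [this]
  gcongr

/-- Summability with weight from cubic decay. -/
lemma summable_weight {L : ℤ → ℂ} {C : ℝ} (hC : 0 ≤ C)
    (h : ∀ n : ℤ, n ≠ 0 → ‖L n‖ ≤ C / |(n : ℝ)| ^ 3) :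
    Summable (fun m : ℤ => ‖L m‖ * (|(m : ℝ)| + 1)) := by
  have hsum2 : Summable (fun m : ℤ => 1 / (m:ℝ)^2) :=
    Real.summable_one_div_int_pow.mpr one_lt_two
  apply Summable.of_nonneg_of_le (f := fun m : ℤ =>
      (if m = 0 then ‖L 0‖ else 0) + (2*C) * (1/(m:ℝ)^2))
    (fun m => by positivity) ?_ ?_
  · intro m
    by_cases hm : m = 0
    · subst hm
      show ‖L 0‖ * (|((0:ℤ):ℝ)| + 1) ≤ (if (0:ℤ) = 0 then ‖L 0‖ else 0) + 2 * C * (1 / ((0:ℤ):ℝ)^2)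
      simp
    · have hm0 : ((m:ℝ)) ≠ 0 := Int.cast_ne_zero.mpr hm
      have h1 : (1:ℝ) ≤ |(m : ℝ)| := by
        have := Int.one_le_abs (show m ≠ 0 from hm)
        calc (1:ℝ) = ((1:ℤ):ℝ) := by norm_num
        _ ≤ ((|m| : ℤ) : ℝ) := by exact_mod_cast this
        _ = |(m:ℝ)| := by push_cast; rfl
      show ‖L m‖ * (|(m:ℝ)| + 1) ≤ (if m = 0 then ‖L 0‖ else 0) + 2 * C * (1 / (m:ℝ)^2)
      rw [if_neg hm, zero_add]
      calc ‖L m‖ * (|(m:ℝ)| + 1) ≤ (C / |(m:ℝ)|^3) * (2*|(m:ℝ)|) := by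
            apply mul_le_mul (h m hm) (by linarith) (by positivity)
            positivity
      _ = (2*C) * (1/(m:ℝ)^2) := by
            rw [show |(m:ℝ)|^3 = (|(m:ℝ)|^2) * |(m:ℝ)| by ring, sq_abs]
            have habs : |(m:ℝ)| ≠ 0 := by positivity
            field_simp
  · apply Summable.add
    · apply summable_of_finite_support
      apply Set.Finite.subset (Set.finite_singleton (0:ℤ))
      intro m hm
      simp only [Function.mem_support] at hm
      by_contra h'
      simp only [Set.mem_singleton_iff] at h'
      rw [if_neg h'] at hm
      exact hm rfl
    · exact hsum2.mul_left _


/-- Fourier coefficients of a product `lam * f` with `lam` having absolutely convergent Fourier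
series and `f` bounded measurable. -/
lemma conv_coeff {f : AddCircle (2*π) → ℂ} (hfm : Measurable f) {M : ℝ} (hfb : ∀ t, ‖f t‖ ≤ M)
    (lam : C(AddCircle (2*π), ℂ))
    (hLnorm : Summable (fun m : ℤ => ‖fourierCoeff (⇑lam) m‖)) (n : ℤ) :
    HasSum (fun m : ℤ => fourierCoeff (⇑lam) m * fourierCoeff f (n - m))
      (fourierCoeff (fun x => lam x * f x) n) := by
  have hLsum : Summable (fourierCoeff (⇑lam)) := hLnorm.of_norm
  have hfInt : Integrable f AddCircle.haarAddCircle :=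
    (MemLp.of_bound hfm.aestronglyMeasurable M (ae_of_all _ hfb)).integrable one_le_two
  set L : ℤ → ℂ := fourierCoeff (⇑lam) with hL
  set F : ℤ → AddCircle (2*π) → ℂ :=
    fun m t => (L m • fourier m t) * (fourier (-n) t * f t) with hF
  have hbnd : ∀ (m : ℤ) (t : AddCircle (2*π)), ‖(L m • fourier m t) * fourier (-n) t‖ ≤ ‖L m‖ := by
    intro m t
    rw [norm_mul, norm_smul, norm_fourier, norm_fourier]
    simp
  have hint : ∀ m, Integrable (F m) AddCircle.haarAddCircle := by
    intro m
    have h1 : Integrable (fun t => ((L m • fourier m t) * fourier (-n) t) * f t)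
        AddCircle.haarAddCircle := by
      apply hfInt.bdd_mul
      · exact (((map_continuous (fourier m)).const_smul (L m)).mul
          (map_continuous (fourier (-n)))).aestronglyMeasurable
      · exact ae_of_all _ (fun t => hbnd m t)
    simpa only [hF, mul_assoc] using h1
  have hnorme : ∀ m, (∫ t, ‖F m t‖ ∂AddCircle.haarAddCircle) = ‖L m‖ * ∫ t, ‖f t‖ ∂AddCircle.haarAddCircle := by
    intro m
    rw [show (fun t => ‖F m t‖) = fun t => ‖L m‖ * ‖f t‖ from funext fun t => ?_]
    · exact integral_const_mul _ _
    · rw [hF]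
      simp only [norm_mul, norm_smul, norm_fourier, mul_one, one_mul]
  have hsummable : Summable (fun m => ∫ t, ‖F m t‖ ∂AddCircle.haarAddCircle) := by
    simp only [hnorme]
    exact hLnorm.mul_right _
  have hkey := hasSum_integral_of_summable_integral_norm hint hsummable
  have hpt : ∀ t, (∑' m, F m t) = fourier (-n) t • (lam t * f t) := by
    intro t
    have h2 := (has_pointwise_sum_fourier_series_of_summable hLsum t).mul_right
      (fourier (-n) t * f t)
    have h3 : HasSum (fun m => F m t) (fourier (-n) t • (lam t * f t)) := by
      convert h2 using 1
      · rfl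
      rw [smul_eq_mul]
      ring
    exact h3.tsum_eq
  have hval : ∀ m, (∫ t, F m t ∂AddCircle.haarAddCircle) = L m * fourierCoeff f (n - m) := by
    intro m
    have heq : (fun t => F m t) = fun t => L m • (fourier (-(n - m)) t • f t) := by
      funext t
      rw [hF]
      simp only [smul_eq_mul]
      rw [show -(n - m) = m + -n by ring, fourier_add]
      ring
    rw [heq, integral_smul]
    rfl
  have hgoal : (∫ t, (∑' m, F m t) ∂AddCircle.haarAddCircle)
      = fourierCoeff (fun x => lam x * f x) n := by
    rw [show (fun t => ∑' m, F m t) = fun t => fourier (-n) t • (lam t * f t) from funext hpt]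
    rfl
  rw [← hgoal]
  convert hkey using 1
  · rfl
  funext m
  rw [← hval m]

end NullSeries

/-- Let `F(z) = ∑_{n≥0} c(n)zⁿ` be holomorphic on the unit disc with `c(n) → 0`,
`K ⊆ 𝕋` closed of measure zero, and `f` a bounded measurable function on `𝕋` such that
`F(re^{it}) → f(t)` uniformly (as `r → 1⁻`) on every closed arc of the complement of `K`.
If `f ∉ H²`, then `∑_{n≥0} c(n)e^{int} − ∑_n f̂(n)e^{int}` is a nontrivial trigonometric series
converging to `0` at every point of the complement of `K`. -/
theorem null_series_from_boundary_behavior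
    (c : ℕ → ℂ) (hc : Tendsto c atTop (nhds 0))
    (F : ℂ → ℂ) (hF : ∀ z : ℂ, ‖z‖ < 1 → HasSum (fun n => c n * z ^ n) (F z))
    (K : Set (AddCircle (2 * π))) (hKclosed : IsClosed K)
    (hKnull : AddCircle.haarAddCircle K = 0)
    (f : AddCircle (2 * π) → ℂ) (hfm : Measurable f) (M : ℝ) (hfb : ∀ t, ‖f t‖ ≤ M)
    (hbd : ∀ a b : ℝ, a ≤ b → (∀ t ∈ Set.Icc a b, ((t : AddCircle (2 * π)) ∉ K)) →
      TendstoUniformlyOn (fun (r : ℝ) (t : ℝ) => F (r * Complex.exp (t * Complex.I)))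
        (fun t => f t) (nhdsWithin 1 (Set.Iio (1 : ℝ))) (Set.Icc a b))
    (hfnotH2 : ∃ n : ℤ, n < 0 ∧ fourierCoeff f n ≠ 0) :
    (∃ n : ℤ, (if 0 ≤ n then c n.toNat else 0) - fourierCoeff f n ≠ 0) ∧
    ∀ t : ℝ, ((t : AddCircle (2 * π)) ∉ K) →
      Tendsto (fun N : ℕ => ∑ n ∈ Finset.Icc (-(N : ℤ)) (N : ℤ),
          ((if 0 ≤ n then c n.toNat else 0) - fourierCoeff f n) * Complex.exp (n * t * Complex.I))
        atTop (nhds 0) := by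
  constructor
  · obtain ⟨n, hn, hne⟩ := hfnotH2
    refine ⟨n, ?_⟩
    rw [if_neg (not_le.mpr hn), zero_sub]
    simpa using hne
  intro t₀ ht₀
  have hπ := Real.pi_pos
  obtain ⟨Cc, hCc⟩ : ∃ Cc : ℝ, ∀ k, ‖c k‖ ≤ Cc := by
    obtain ⟨B, hB⟩ := (hc.norm).bddAbove_range
    exact ⟨B, fun k => hB ⟨k, rfl⟩⟩
  have hCc0 : 0 ≤ Cc := le_trans (norm_nonneg _) (hCc 0)
  have hM0 : 0 ≤ M := le_trans (norm_nonneg _) (hfb 0)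
  have hf2 : MemLp f 2 AddCircle.haarAddCircle :=
    MemLp.of_bound hfm.aestronglyMeasurable M (ae_of_all _ hfb)
  have hfInt : Integrable f AddCircle.haarAddCircle := hf2.integrable one_le_two
  have hfc_bound : ∀ k : ℤ, ‖fourierCoeff f k‖ ≤ M := by
    intro k
    calc ‖fourierCoeff f k‖ ≤ ∫ t, ‖fourier (-k) t • f t‖ ∂AddCircle.haarAddCircle :=
          norm_integral_le_integral_norm _
    _ = ∫ t, ‖f t‖ ∂AddCircle.haarAddCircle := by
          congr 1
          funext t
          rw [norm_smul, NullSeries.norm_fourier, one_mul]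
    _ ≤ ∫ _t, M ∂AddCircle.haarAddCircle :=
          integral_mono hfInt.norm (integrable_const M) fun t => hfb t
    _ = M := by simp
  -- Riemann–Lebesgue via Bessel
  have hfc0 : Tendsto (fourierCoeff f) cofinite (nhds 0) := by
    have hre : ∀ i, fourierBasis.repr (hf2.toLp f) i = fourierCoeff f i := by
      intro i
      rw [fourierBasis_repr]
      apply integral_congr_ae
      filter_upwards [hf2.coeFn_toLp] with t ht
      simp only [ht]
    have hmem := lp.memℓp (fourierBasis.repr (hf2.toLp f))
    rw [memℓp_gen_iff (by norm_num : (0:ℝ) < (2 : ENNReal).toReal)] at hmem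
    have hsq : Summable (fun i : ℤ => ‖fourierCoeff f i‖ ^ (2:ℝ)) := by
      refine hmem.congr fun i => ?_
      rw [hre i]
      norm_num
    rw [tendsto_zero_iff_norm_tendsto_zero]
    have h2 : Tendsto (fun i => ‖fourierCoeff f i‖ ^ (2:ℝ)) cofinite (nhds 0) :=
      hsq.tendsto_cofinite_zero
    have h3 : Tendsto (fun i => Real.sqrt (‖fourierCoeff f i‖ ^ (2:ℝ))) cofinite (nhds 0) := by
      have h4 := (Real.continuous_sqrt.tendsto 0).comp h2
      rw [Real.sqrt_zero] at h4
      exact h4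
    refine h3.congr fun i => ?_
    have h8 : ‖fourierCoeff f i‖ ^ (2:ℝ) = ‖fourierCoeff f i‖ ^ (2:ℕ) := by
      rw [← Real.rpow_natCast]
      norm_num
    rw [h8, Real.sqrt_sq (norm_nonneg _)]
  set d : ℤ → ℂ := fun k => (if 0 ≤ k then c k.toNat else 0) - fourierCoeff f k with hdd
  have hD : ∀ k, ‖d k‖ ≤ Cc + M := by
    intro k
    apply (norm_sub_le _ _).trans
    gcongr
    · split
      · exact hCc _
      · simpa using hCc0
    · exact hfc_bound k
  have hd0 : Tendsto d cofinite (nhds 0) := by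
    have ha0 : Tendsto (fun k : ℤ => (if 0 ≤ k then c k.toNat else 0 : ℂ)) cofinite (nhds 0) := by
      rw [Int.cofinite_eq, tendsto_sup]
      constructor
      · apply Tendsto.congr' _ tendsto_const_nhds
        filter_upwards [eventually_le_atBot (-1 : ℤ)] with k hk
        rw [if_neg (by omega)]
      · have htoNat : Tendsto Int.toNat atTop atTop := by
          apply tendsto_atTop_atTop.mpr
          intro b
          exact ⟨(b : ℤ), fun k hk => (Int.le_toNat (le_trans (Int.ofNat_nonneg b) hk)).mpr hk⟩
        apply Tendsto.congr' _ (hc.comp htoNat)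
        filter_upwards [eventually_ge_atTop (0 : ℤ)] with k hk
        rw [if_pos hk]
        rfl
    have h5 := ha0.sub hfc0
    simpa using h5
  obtain ⟨ε, hεt, hεb, hεmem⟩ := NullSeries.exists_tail_sup hD hd0
  -- choice of δ and the bump
  have hKc : IsClosed ((fun x : ℝ => (x : AddCircle (2*π))) ⁻¹' K) :=
    hKclosed.preimage (AddCircle.continuous_mk' _)
  obtain ⟨δ₀, hδ₀pos, hδ₀sub⟩ := Metric.isOpen_iff.mp hKc.isOpen_compl t₀ ht₀
  set δ : ℝ := min (δ₀/2) (π/2) with hδ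
  have hδpos : 0 < δ := lt_min (by positivity) (by positivity)
  have hδπ : δ < π := lt_of_le_of_lt (min_le_right _ _) (by linarith)
  have hδK : ∀ x ∈ Set.Icc (t₀ - δ) (t₀ + δ), ((x : AddCircle (2*π)) ∉ K) := by
    intro x hx
    apply hδ₀sub
    rw [Metric.mem_ball, Real.dist_eq]
    have h6 : |x - t₀| ≤ δ := abs_sub_le_iff.mpr ⟨by linarith [hx.2], by linarith [hx.1]⟩
    calc |x - t₀| ≤ δ := h6
    _ ≤ δ₀/2 := min_le_left _ _
    _ < δ₀ := by linarith
  set φb : ContDiffBump t₀ := ⟨δ/2, δ, by positivity, by linarith⟩ with hφb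
  set a : ℝ := t₀ - π with haa
  have hab : a < a + 2*π := by linarith
  set lamr : ℝ → ℂ := fun x => ((φb x : ℝ) : ℂ) with hlamr
  have hφb_out : ∀ x : ℝ, x ∉ Set.Ioo (t₀ - δ) (t₀ + δ) → φb x = 0 := by
    intro x hx
    rw [← Function.notMem_support, φb.support_eq]
    rwa [show Metric.ball t₀ φb.rOut = Set.Ioo (t₀ - δ) (t₀ + δ) from by
      rw [Real.ball_eq_Ioo]]
  have hlamr_a : lamr a = 0 := by
    rw [hlamr]
    simp only [Complex.ofReal_eq_zero]
    apply hφb_out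
    intro hmem
    have h9 := hmem.1
    simp only [haa] at h9
    linarith
  have hlamr_b : lamr (a + 2*π) = 0 := by
    rw [hlamr]
    simp only [Complex.ofReal_eq_zero]
    apply hφb_out
    intro hmem
    have h9 := hmem.2
    simp only [haa] at h9
    linarith
  have hlamr_cont : Continuous lamr :=
    Complex.continuous_ofReal.comp (φb.contDiff (n := (⊤:ℕ∞))).continuous
  set lam0 : AddCircle (2*π) → ℂ := AddCircle.liftIco (2*π) a lamr with hlam0
  have hlam_cont : Continuous lam0 :=
    AddCircle.liftIco_continuous (by rw [hlamr_a, hlamr_b]) hlamr_cont.continuousOn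
  set lam : C(AddCircle (2*π), ℂ) := ⟨lam0, hlam_cont⟩ with hlamdef
  have hlam_coe : ⇑lam = lam0 := rfl
  set L : ℤ → ℂ := fourierCoeff (⇑lam) with hL
  obtain ⟨CB, hCB0, hCB⟩ := NullSeries.bump_decay t₀ φb (by
    show φb.rOut < π
    exact hδπ)
  have hLbound : ∀ n : ℤ, n ≠ 0 → ‖L n‖ ≤ CB / |(n:ℝ)|^3 := by
    intro n hn
    rw [hL, hlam_coe, hlam0, haa, hlamr]
    exact hCB n hn
  have hLw : Summable (fun m : ℤ => ‖L m‖ * (|(m:ℝ)| + 1)) :=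
    NullSeries.summable_weight hCB0 hLbound
  have hLnorm : Summable (fun m : ℤ => ‖L m‖) := by
    apply Summable.of_nonneg_of_le (fun m => norm_nonneg _) (fun m => ?_) hLw
    nlinarith [norm_nonneg (L m), abs_nonneg ((m:ℝ))]
  have hLsum : Summable L := hLnorm.of_norm
  have hlam_mem : ∀ x ∈ Set.Ico a (a + 2*π), lam0 (x : AddCircle (2*π)) = lamr x :=
    fun x hx => AddCircle.liftIco_coe_apply hx
  have hlam_t₀ : lam0 ((t₀ : ℝ) : AddCircle (2*π)) = 1 := by
    rw [hlam_mem t₀ ⟨by simp [haa]; linarith, by simp [haa]; linarith⟩, hlamr]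
    have h7 : φb t₀ = 1 := φb.one_of_mem_closedBall (Metric.mem_closedBall_self (by positivity))
    simp [h7]
  have hlam_le : ∀ x : ℝ, ‖lam0 (x : AddCircle (2*π))‖ ≤ 1 := by
    intro x
    obtain ⟨y, hy, hyx⟩ : ∃ y ∈ Set.Ico a (a + 2*π), (y : AddCircle (2*π)) = (x : AddCircle (2*π)) := by
      refine ⟨toIcoMod (by positivity : (0:ℝ) < 2*π) a x, ?_, ?_⟩
      · exact toIcoMod_mem_Ico _ _ _
      · have h11 : toIcoMod (by positivity : (0:ℝ) < 2*π) a x - x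
            ∈ AddSubgroup.zmultiples (2*π) := by
          rw [toIcoMod_sub_self]
          exact AddSubgroup.zsmul_mem_zmultiples _ _
        exact (QuotientAddGroup.eq_iff_sub_mem).mpr h11
    rw [← hyx, hlam_mem y hy, hlamr]
    simp only [Complex.norm_real, Real.norm_eq_abs]
    rw [abs_of_nonneg φb.nonneg]
    exact φb.le_one
  have hlam_zero : ∀ x ∈ Set.Ioc a (a + 2*π), x ∉ Set.Icc (t₀ - δ) (t₀ + δ) →
      lam0 (x : AddCircle (2*π)) = 0 := by
    intro x hx hxn
    rcases eq_or_lt_of_le hx.2 with heq | hlt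
    · rw [heq, show ((a + 2*π : ℝ) : AddCircle (2*π)) = (a : AddCircle (2*π)) from
        AddCircle.coe_add_period (2*π) a, hlam_mem a ⟨le_refl a, by linarith⟩]
      exact hlamr_a
    · rw [hlam_mem x ⟨hx.1.le, hlt⟩, hlamr]
      simp only [Complex.ofReal_eq_zero]
      apply hφb_out
      intro hmem
      exact hxn ⟨hmem.1.le, hmem.2.le⟩
  -- inversion at t₀
  have hinv : HasSum (fun m : ℤ => L m * Complex.exp (m * t₀ * Complex.I)) 1 := by
    have h0 := has_pointwise_sum_fourier_series_of_summable (f := lam)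
      hLsum ((t₀ : ℝ) : AddCircle (2*π))
    rw [show lam ((t₀:ℝ) : AddCircle (2*π)) = 1 from hlam_t₀] at h0
    have h10 : (fun m : ℤ => L m * Complex.exp (m * t₀ * Complex.I))
        = fun i => fourierCoeff (⇑lam) i • fourier i ((t₀:ℝ) : AddCircle (2*π)) :=
      funext fun m => by rw [smul_eq_mul, NullSeries.fourier_eq_exp, hL]
    rw [h10]
    exact h0
  -- the vanishing of the formal product
  have hfour_cont : ∀ mm : ℤ, Continuous (fun x : ℝ => (fourier mm ((x:ℝ) : AddCircle (2*π)) : ℂ)) :=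
    fun mm => (map_continuous (fourier mm)).comp (AddCircle.continuous_mk' _)
  have hlamcoe_cont : Continuous (fun x : ℝ => lam0 ((x:ℝ) : AddCircle (2*π))) :=
    hlam_cont.comp (AddCircle.continuous_mk' _)
  have hFcont : ∀ r : ℝ, r ∈ Set.Ioo (0:ℝ) 1 →
      Continuous fun x : ℝ => F ((r:ℂ) * Complex.exp ((x:ℂ) * Complex.I)) := by
    intro r hr
    have hzlt : ∀ x : ℝ, ‖(r:ℂ) * Complex.exp ((x:ℂ) * Complex.I)‖ < 1 := by
      intro x
      rw [norm_mul, show ‖Complex.exp ((x:ℂ) * Complex.I)‖ = 1 from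
        Complex.norm_exp_ofReal_mul_I x, mul_one, Complex.norm_real, Real.norm_eq_abs,
        abs_of_pos hr.1]
      exact hr.2
    have h1 : Continuous fun x : ℝ => ∑' k : ℕ, c k * ((r:ℂ) * Complex.exp ((x:ℂ)*Complex.I))^k := by
      apply continuous_tsum (u := fun k : ℕ => Cc * r^k)
      · intro k
        exact continuous_const.mul (((continuous_const.mul
          (Complex.continuous_ofReal.mul continuous_const).cexp)).pow k)
      · exact (summable_geometric_of_lt_one hr.1.le hr.2).mul_left Cc
      · intro k x
        rw [norm_mul, norm_pow, norm_mul, show ‖Complex.exp ((x:ℂ) * Complex.I)‖ = 1 from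
          Complex.norm_exp_ofReal_mul_I x, mul_one, Complex.norm_real, Real.norm_eq_abs,
          abs_of_pos hr.1]
        exact mul_le_mul_of_nonneg_right (hCc k) (pow_nonneg hr.1.le k)
    exact h1.congr (fun x => (hF _ (hzlt x)).tsum_eq)
  have hΛ : ∀ n : ℤ, HasSum (fun m : ℤ => L m * d (n - m)) 0 := by
    intro n
    have h2 : HasSum (fun m : ℤ => L m * fourierCoeff f (n - m))
        (fourierCoeff (fun x => lam x * f x) n) := NullSeries.conv_coeff hfm hfb lam hLnorm n
    have h1 : HasSum (fun m : ℤ => L m * (if 0 ≤ n - m then c (n - m).toNat else 0))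
        (fourierCoeff (fun x => lam x * f x) n) := by
      classical
      have hinj : Function.Injective (fun k : ℕ => n - (k:ℤ)) := by
        intro p q h
        simp only at h
        omega
      rw [← Function.Injective.hasSum_iff hinj ?_]
      swap
      · intro m hm
        rw [if_neg, mul_zero]
        intro hge
        refine hm ⟨(n - m).toNat, ?_⟩
        show n - ((n - m).toNat : ℤ) = m
        rw [Int.toNat_of_nonneg hge]
        ring
      have hcomp : ((fun m : ℤ => L m * (if 0 ≤ n - m then c (n - m).toNat else 0)) ∘
          (fun k : ℕ => n - (k:ℤ))) = fun k : ℕ => L (n - (k:ℤ)) * c k := by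
        funext k
        simp only [Function.comp_apply]
        rw [if_pos (by omega : (0:ℤ) ≤ n - (n - (k:ℤ)))]
        rw [show n - (n - (k:ℤ)) = (k:ℤ) from by ring, Int.toNat_natCast]
      rw [hcomp]
      have hLcomp : Summable (fun k : ℕ => ‖L (n - (k:ℤ))‖) := hLnorm.comp_injective hinj
      have hW : Summable (fun k : ℕ => L (n - (k:ℤ)) * c k) := by
        apply Summable.of_norm_bounded (g := fun k : ℕ => ‖L (n - (k:ℤ))‖ * Cc) (hLcomp.mul_right _)
        intro k
        rw [norm_mul]
        exact mul_le_mul_of_nonneg_left (hCc k) (norm_nonneg _)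
      rw [Summable.hasSum_iff hW]
      set G : ℝ → ℂ := fun r => ∑' k : ℕ, L (n - (k:ℤ)) * c k * ((r:ℂ))^k with hG
      have hG1 : Tendsto G (nhdsWithin 1 (Set.Iio 1))
          (nhds (∑' k : ℕ, L (n - (k:ℤ)) * c k)) := by
        have hG1' : Tendsto (fun r : ℝ => ∑' k : ℕ, L (n - (k:ℤ)) * c k * ((r:ℂ))^k)
            (nhdsWithin 1 (Set.Iio 1)) (nhds (∑' k : ℕ, L (n - (k:ℤ)) * c k)) := by
          have heq : (fun k : ℕ => L (n - (k:ℤ)) * c k)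
              = fun k : ℕ => L (n - (k:ℤ)) * c k * ((1:ℝ):ℂ)^k := by
            funext k
            norm_num
          rw [heq]
          apply tendsto_tsum_of_dominated_convergence
            (bound := fun k : ℕ => ‖L (n - (k:ℤ))‖ * Cc) (hLcomp.mul_right _)
          · intro k
            have hcont : Continuous (fun r : ℝ => L (n - (k:ℤ)) * c k * ((r:ℂ))^k) :=
              continuous_const.mul (Complex.continuous_ofReal.pow k)
            exact tendsto_nhdsWithin_of_tendsto_nhds (hcont.tendsto 1)
          · filter_upwards [Ioo_mem_nhdsLT_of_mem
              (show (1:ℝ) ∈ Set.Ioc (0:ℝ) 1 from ⟨one_pos, le_refl 1⟩)] with r hr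
            intro k
            rw [norm_mul, norm_mul, norm_pow, Complex.norm_real, Real.norm_eq_abs,
              abs_of_pos hr.1]
            calc ‖L (n - (k:ℤ))‖ * ‖c k‖ * r^k ≤ ‖L (n - (k:ℤ))‖ * Cc * 1 := by
                  apply mul_le_mul (mul_le_mul_of_nonneg_left (hCc k) (norm_nonneg _))
                    (pow_le_one₀ hr.1.le hr.2.le) (pow_nonneg hr.1.le k)
                  positivity
            _ = ‖L (n - (k:ℤ))‖ * Cc := by ring
        exact hG1'
      have hGΦ : ∀ r : ℝ, r ∈ Set.Ioo (0:ℝ) 1 → G r = (1/(2*π) : ℝ) •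
          ∫ x in a..(a + 2*π), fourier (-n) ((x:ℝ) : AddCircle (2*π)) •
            (lam0 ((x:ℝ) : AddCircle (2*π)) * F ((r:ℂ) * Complex.exp ((x:ℂ) * Complex.I))) := by
        intro r hr
        have hrpos := hr.1
        have hr1 := hr.2
        set z : ℝ → ℂ := fun x => (r:ℂ) * Complex.exp ((x:ℂ) * Complex.I) with hz
        have hznorm : ∀ x : ℝ, ‖z x‖ = r := by
          intro x
          rw [hz]
          dsimp only
          rw [norm_mul, Complex.norm_real, Real.norm_eq_abs, abs_of_pos hrpos,
            show ‖Complex.exp ((x:ℂ) * Complex.I)‖ = 1 from Complex.norm_exp_ofReal_mul_I x,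
            mul_one]
        set Fk : ℕ → ℝ → ℂ := fun k x => fourier (-n) ((x:ℝ) : AddCircle (2*π)) •
            (lam0 ((x:ℝ) : AddCircle (2*π)) * (c k * (z x)^k)) with hFk
        have hFkcont : ∀ k, Continuous (Fk k) := by
          intro k
          apply (hfour_cont (-n)).smul
          apply hlamcoe_cont.mul
          exact continuous_const.mul ((continuous_const.mul
            (Complex.continuous_ofReal.mul continuous_const).cexp).pow k)
        have hFkint : ∀ k, IntegrableOn (Fk k) (Set.Ioc a (a + 2*π)) volume :=
          fun k => (hFkcont k).integrableOn_Ioc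
        have hFknorm : ∀ (k : ℕ) (x : ℝ), ‖Fk k x‖ ≤ Cc * r^k := by
          intro k x
          rw [hFk]
          dsimp only
          rw [norm_smul, NullSeries.norm_fourier, one_mul, norm_mul, norm_mul, norm_pow, hznorm]
          have h30 := mul_le_mul (hlam_le x)
            (mul_le_mul_of_nonneg_right (hCc k) (by positivity : (0:ℝ) ≤ r^k))
            (by positivity) zero_le_one
          simpa using h30
        have hsummable : Summable (fun k : ℕ => ∫ x in Set.Ioc a (a + 2*π), ‖Fk k x‖) := by
          apply Summable.of_nonneg_of_le
            (fun k => integral_nonneg (fun x => norm_nonneg _)) (fun k => ?_)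
            (((summable_geometric_of_lt_one hrpos.le hr1).mul_left Cc).mul_right (2*π))
          calc (∫ x in Set.Ioc a (a + 2*π), ‖Fk k x‖)
              ≤ ∫ _x in Set.Ioc a (a + 2*π), (Cc * r^k) := by
                apply integral_mono ((hFkint k).norm) ?_ (fun x => hFknorm k x)
                apply (integrableOn_const_iff).mpr (Or.inr ?_)
                rw [Real.volume_Ioc]
                exact ENNReal.ofReal_lt_top
          _ = (Cc * r^k) * (2*π) := by
                rw [setIntegral_const, smul_eq_mul, Real.volume_real_Ioc,
                  max_eq_left (by linarith), show a + 2*π - a = 2*π from by ring,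
                  mul_comm]
        have hs := hasSum_integral_of_summable_integral_norm hFkint hsummable
        have hpt : ∀ x : ℝ, (∑' k : ℕ, Fk k x) = fourier (-n) ((x:ℝ) : AddCircle (2*π)) •
            (lam0 ((x:ℝ) : AddCircle (2*π)) * F (z x)) := by
          intro x
          have hhz : ‖z x‖ < 1 := by rw [hznorm]; exact hr1
          have hFz := (hF (z x) hhz).mul_left
            ((fourier (-n) ((x:ℝ) : AddCircle (2*π)) : ℂ) * lam0 ((x:ℝ) : AddCircle (2*π)))
          have h31 : HasSum (fun k => Fk k x) (fourier (-n) ((x:ℝ) : AddCircle (2*π)) •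
              (lam0 ((x:ℝ) : AddCircle (2*π)) * F (z x))) := by
            convert hFz using 1
            · rfl
            · funext k
              rw [hFk]
              dsimp only
              rw [smul_eq_mul]
              ring
            · rw [smul_eq_mul]
              ring
          exact h31.tsum_eq
        have hFkval : ∀ k : ℕ, (∫ x in Set.Ioc a (a + 2*π), Fk k x)
            = (c k * ((r:ℂ))^k) * (((2*π:ℝ)) • L (n - (k:ℤ))) := by
          intro k
          have hrw : ∀ x : ℝ, Fk k x = (c k * ((r:ℂ))^k) •
              ((fourier (-(n - (k:ℤ))) ((x:ℝ) : AddCircle (2*π)) : ℂ) •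
                lam0 ((x:ℝ) : AddCircle (2*π))) := by
            intro x
            rw [hFk]
            dsimp only
            rw [smul_eq_mul, smul_eq_mul, smul_eq_mul]
            have hzk : (z x)^k = ((r:ℂ))^k * fourier (k:ℤ) ((x:ℝ) : AddCircle (2*π)) := by
              rw [hz]
              dsimp only
              rw [mul_pow, NullSeries.fourier_eq_exp]
              congr 1
              rw [← Complex.exp_nat_mul]
              congr 1
              push_cast
              ring
            have hfadd : (fourier (-n) ((x:ℝ):AddCircle (2*π)) : ℂ) *
                fourier (k:ℤ) ((x:ℝ):AddCircle (2*π))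
                = fourier (-(n - (k:ℤ))) ((x:ℝ):AddCircle (2*π)) := by
              rw [show -(n - (k:ℤ)) = -n + (k:ℤ) from by ring, fourier_add]
            rw [hzk, ← hfadd]
            ring
          rw [integral_congr_ae (Filter.Eventually.of_forall
            (fun x => hrw x) : _ =ᵐ[volume.restrict (Set.Ioc a (a + 2*π))] _)]
          rw [integral_smul]
          rw [smul_eq_mul]
          congr 1
          have hcoeff := fourierCoeff_eq_intervalIntegral (lam0) (n - (k:ℤ)) a
          rw [intervalIntegral.integral_of_le hab.le] at hcoeff
          calc (∫ x in Set.Ioc a (a+2*π),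
                (fourier (-(n-(k:ℤ))) ((x:ℝ):AddCircle (2*π)) : ℂ) • lam0 ((x:ℝ):AddCircle (2*π)))
              = (2*π:ℝ) • ((1/(2*π):ℝ) • ∫ x in Set.Ioc a (a+2*π),
                (fourier (-(n-(k:ℤ))) ((x:ℝ):AddCircle (2*π)) : ℂ) •
                  lam0 ((x:ℝ):AddCircle (2*π))) := by
                rw [smul_smul, mul_one_div, div_self (by positivity : (2*π:ℝ) ≠ 0), one_smul]
          _ = (2*π:ℝ) • L (n - (k:ℤ)) := by
                rw [← hcoeff, hL, hlam_coe]
        have hsmul : ∀ k : ℕ, L (n - (k:ℤ)) * c k * ((r:ℂ))^k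
            = (1/(2*π) : ℝ) • ((c k * ((r:ℂ))^k) * (((2*π:ℝ)) • L (n - (k:ℤ)))) := by
          intro k
          rw [Complex.real_smul, Complex.real_smul]
          push_cast
          have hpine : ((π:ℂ)) ≠ 0 := Complex.ofReal_ne_zero.mpr Real.pi_ne_zero
          field_simp
        have hGr : G r = ∑' k : ℕ, (1/(2*π) : ℝ) •
            ((c k * ((r:ℂ))^k) * (((2*π:ℝ)) • L (n - (k:ℤ)))) := by
          rw [hG]
          exact tsum_congr hsmul
        rw [hGr]
        rw [show (fun k : ℕ => ∫ x in Set.Ioc a (a+2*π), Fk k x)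
            = fun k => (c k * ((r:ℂ))^k) * (((2*π:ℝ)) • L (n - (k:ℤ))) from funext hFkval] at hs
        have hs2 := hs.const_smul ((1/(2*π)) : ℝ)
        rw [hs2.tsum_eq]
        rw [intervalIntegral.integral_of_le hab.le]
        congr 1
        exact integral_congr_ae (Filter.Eventually.of_forall (fun x => hpt x))
      have hΦt : Tendsto (fun r : ℝ => (1/(2*π) : ℝ) •
          ∫ x in a..(a + 2*π), fourier (-n) ((x:ℝ) : AddCircle (2*π)) •
            (lam0 ((x:ℝ) : AddCircle (2*π)) * F ((r:ℂ) * Complex.exp ((x:ℂ) * Complex.I))))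
          (nhdsWithin 1 (Set.Iio 1)) (nhds (fourierCoeff (fun x => lam x * f x) n)) := by
        rw [Metric.tendsto_nhds]
        intro η hη
        have huni := hbd (t₀ - δ) (t₀ + δ) (by linarith) hδK
        rw [Metric.tendstoUniformlyOn_iff] at huni
        filter_upwards [huni (η/2) (by positivity),
          Ioo_mem_nhdsLT_of_mem (show (1:ℝ) ∈ Set.Ioc (0:ℝ) 1 from ⟨one_pos, le_refl 1⟩)]
          with r hruni hr
        have hFrcont := hFcont r hr
        have hint1 : IntervalIntegrable (fun x : ℝ => fourier (-n) ((x:ℝ) : AddCircle (2*π)) •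
            (lam0 ((x:ℝ):AddCircle (2*π)) * F ((r:ℂ) * Complex.exp ((x:ℂ) * Complex.I))))
            volume a (a + 2*π) := by
          apply Continuous.intervalIntegrable
          exact (hfour_cont (-n)).smul (hlamcoe_cont.mul hFrcont)
        have hint2 : IntervalIntegrable (fun x : ℝ => fourier (-n) ((x:ℝ):AddCircle (2*π)) •
            (lam0 ((x:ℝ):AddCircle (2*π)) * f ((x:ℝ):AddCircle (2*π)))) volume a (a + 2*π) := by
          rw [intervalIntegrable_iff]
          apply Integrable.mono' (g := fun _ => M)
          · apply (integrableOn_const_iff).mpr (Or.inr ?_)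
            rw [Set.uIoc_of_le hab.le, Real.volume_Ioc]
            exact ENNReal.ofReal_lt_top
          · apply AEStronglyMeasurable.fun_smul
            · exact ((hfour_cont (-n)).aestronglyMeasurable)
            · apply AEStronglyMeasurable.mul
              · exact hlamcoe_cont.aestronglyMeasurable
              · exact (hfm.comp (AddCircle.continuous_mk' (2*π)).measurable).aestronglyMeasurable
          · apply ae_of_all
            intro x
            rw [norm_smul, NullSeries.norm_fourier, one_mul, norm_mul]
            calc ‖lam0 ((x:ℝ):AddCircle (2*π))‖ * ‖f ((x:ℝ):AddCircle (2*π))‖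
                ≤ 1 * M := mul_le_mul (hlam_le x) (hfb _) (norm_nonneg _) zero_le_one
            _ = M := one_mul M
        rw [dist_eq_norm]
        have hVeq : fourierCoeff (fun x => lam x * f x) n = (1/(2*π):ℝ) •
            ∫ x in a..(a+2*π), fourier (-n) ((x:ℝ):AddCircle (2*π)) •
              (lam0 ((x:ℝ):AddCircle (2*π)) * f ((x:ℝ):AddCircle (2*π))) :=
          fourierCoeff_eq_intervalIntegral (fun x => lam x * f x) n a
        rw [hVeq, ← smul_sub, ← intervalIntegral.integral_sub hint1 hint2]
        have hptb : ∀ x ∈ Set.uIoc a (a + 2*π),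
            ‖fourier (-n) ((x:ℝ):AddCircle (2*π)) •
              (lam0 ((x:ℝ):AddCircle (2*π)) * F ((r:ℂ) * Complex.exp ((x:ℂ) * Complex.I)))
            - fourier (-n) ((x:ℝ):AddCircle (2*π)) •
              (lam0 ((x:ℝ):AddCircle (2*π)) * f ((x:ℝ):AddCircle (2*π)))‖ ≤ η/2 := by
          intro x hx
          rw [Set.uIoc_of_le hab.le] at hx
          rw [← smul_sub, ← mul_sub, norm_smul, NullSeries.norm_fourier, one_mul, norm_mul]
          by_cases hmem : x ∈ Set.Icc (t₀ - δ) (t₀ + δ)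
          · have hd2 := hruni x hmem
            rw [dist_comm, dist_eq_norm] at hd2
            calc ‖lam0 ((x:ℝ):AddCircle (2*π))‖ *
                ‖F ((r:ℂ) * Complex.exp ((x:ℂ) * Complex.I)) - f ((x:ℝ):AddCircle (2*π))‖
                ≤ 1 * (η/2) := mul_le_mul (hlam_le x) hd2.le (norm_nonneg _) zero_le_one
            _ = η/2 := one_mul _
          · rw [hlam_zero x hx hmem]
            simp only [norm_zero, zero_mul]
            positivity
        calc ‖(1/(2*π):ℝ) • ∫ x in a..(a+2*π),
              (fourier (-n) ((x:ℝ):AddCircle (2*π)) •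
                (lam0 ((x:ℝ):AddCircle (2*π)) * F ((r:ℂ) * Complex.exp ((x:ℂ) * Complex.I)))
              - fourier (-n) ((x:ℝ):AddCircle (2*π)) •
                (lam0 ((x:ℝ):AddCircle (2*π)) * f ((x:ℝ):AddCircle (2*π))))‖
            ≤ (1/(2*π)) * ((η/2) * |a + 2*π - a|) := by
              rw [norm_smul, Real.norm_eq_abs, abs_of_pos (by positivity : (0:ℝ) < 1/(2*π))]
              exact mul_le_mul_of_nonneg_left
                (intervalIntegral.norm_integral_le_of_norm_le_const hptb) (by positivity)
        _ = η/2 := by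
              rw [show a + 2*π - a = 2*π from by ring, abs_of_pos (by positivity : (0:ℝ) < 2*π)]
              field_simp
        _ < η := by linarith
      have hG2 : Tendsto G (nhdsWithin 1 (Set.Iio 1))
          (nhds (fourierCoeff (fun x => lam x * f x) n)) := by
        apply hΦt.congr'
        filter_upwards [Ioo_mem_nhdsLT_of_mem
          (show (1:ℝ) ∈ Set.Ioc (0:ℝ) 1 from ⟨one_pos, le_refl 1⟩)] with r hr
        exact (hGΦ r hr).symm
      exact tendsto_nhds_unique hG1 hG2
    have h21 := h1.sub h2
    rw [sub_self] at h21
    have h22 : (fun m : ℤ => L m * (if 0 ≤ n - m then c (n - m).toNat else 0)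
        - L m * fourierCoeff f (n - m)) = fun m : ℤ => L m * d (n - m) := by
      funext m
      simp only [hdd]
      ring
    rw [h22] at h21
    exact h21
  -- Rajchman's estimate
  set E : ℤ → ℂ := fun k => Complex.exp (k * t₀ * Complex.I) with hEE
  have hE1 : ∀ k : ℤ, ‖E k‖ = 1 := by
    intro k
    rw [hEE]
    have h12 : ((k:ℂ) * (t₀:ℂ) * Complex.I) = ((k * t₀ : ℝ) : ℂ) * Complex.I := by
      push_cast
      ring
    dsimp only
    rw [h12]
    exact Complex.norm_exp_ofReal_mul_I _
  have hEadd : ∀ m k : ℤ, E (m + k) = E m * E k := by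
    intro m k
    rw [hEE]
    dsimp only
    rw [← Complex.exp_add]
    congr 1
    push_cast
    ring
  set S : ℕ → ℂ := fun N => ∑ k ∈ Finset.Icc (-(N:ℤ)) (N:ℤ), d k * E k with hSS
  set Q : ℕ → ℤ → ℂ := fun N m => ∑ k ∈ Finset.Icc (-(N:ℤ) - m) ((N:ℤ) - m), d k * E k with hQQ
  have hinv' : HasSum (fun m : ℤ => L m * E m) 1 := hinv
  have hQcard : ∀ (N : ℕ) (m : ℤ), ‖Q N m‖ ≤ (2*(N:ℝ)+1) * (Cc + M) := by
    intro N m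
    simp only [hQQ]
    apply (norm_sum_le _ _).trans
    have h13 : ∀ k ∈ Finset.Icc (-(N:ℤ) - m) ((N:ℤ) - m), ‖d k * E k‖ ≤ Cc + M := by
      intro k _
      rw [norm_mul, hE1, mul_one]
      exact hD k
    apply (Finset.sum_le_card_nsmul _ _ _ h13).trans
    rw [nsmul_eq_mul, Int.card_Icc]
    have h14 : (((((N:ℤ) - m) + 1 - (-(N:ℤ) - m)).toNat) : ℝ) = 2*(N:ℝ)+1 := by
      rw [show (((N:ℤ) - m) + 1 - (-(N:ℤ) - m)).toNat = 2*N+1 from by omega]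
      push_cast
      ring
    rw [h14]
  have hkey : ∀ N : ℕ, S N = ∑' m : ℤ, (L m * E m) * (S N - Q N m) := by
    intro N
    have hsum1 : Summable (fun m : ℤ => L m * E m * S N) := by
      apply Summable.of_norm_bounded (g := fun m => ‖L m‖ * ‖S N‖) (hLnorm.mul_right _)
      intro m
      rw [norm_mul, norm_mul, hE1, mul_one]
    have hsum2 : Summable (fun m : ℤ => L m * E m * Q N m) := by
      apply Summable.of_norm_bounded (g := fun m => ‖L m‖ * ((2*(N:ℝ)+1) * (Cc + M)))
        (hLnorm.mul_right _)
      intro m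
      rw [norm_mul, norm_mul, hE1, mul_one]
      exact mul_le_mul_of_nonneg_left (hQcard N m) (norm_nonneg _)
    have hz : ∑' m : ℤ, L m * E m * Q N m = 0 := by
      have hre : ∀ m : ℤ, L m * E m * Q N m
          = ∑ n ∈ Finset.Icc (-(N:ℤ)) (N:ℤ), L m * d (n - m) * E n := by
        intro m
        simp only [hQQ]
        rw [Finset.mul_sum]
        rw [show Finset.Icc (-(N:ℤ) - m) ((N:ℤ) - m)
            = Finset.map (addRightEmbedding (-m)) (Finset.Icc (-(N:ℤ)) (N:ℤ)) from by
          rw [Finset.map_add_right_Icc]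
          congr 1 <;> ring]
        rw [Finset.sum_map]
        apply Finset.sum_congr rfl
        intro n _
        have h15 : addRightEmbedding (-m) n = n + (-m) := rfl
        rw [h15]
        have h16 : E n = E m * E (n + -m) := by
          rw [← hEadd]
          congr 1
          ring
        rw [show n + -m = n - m from by ring] at h16 ⊢
        rw [h16]
        ring
      calc ∑' m : ℤ, L m * E m * Q N m
          = ∑' m : ℤ, ∑ n ∈ Finset.Icc (-(N:ℤ)) (N:ℤ), L m * d (n - m) * E n :=
            tsum_congr hre
      _ = ∑ n ∈ Finset.Icc (-(N:ℤ)) (N:ℤ), ∑' m : ℤ, L m * d (n - m) * E n := by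
            apply Summable.tsum_finsetSum
            intro n _
            exact (hΛ n).summable.mul_right _
      _ = 0 := by
            apply Finset.sum_eq_zero
            intro n _
            have h17 := ((hΛ n).mul_right (E n)).tsum_eq
            rw [zero_mul] at h17
            exact h17
    have h1S : ∑' m : ℤ, L m * E m * S N = S N := by
      rw [tsum_mul_right, hinv'.tsum_eq, one_mul]
    calc S N = S N - 0 := by ring
    _ = (∑' m : ℤ, L m * E m * S N) - ∑' m : ℤ, L m * E m * Q N m := by rw [h1S, hz]
    _ = ∑' m : ℤ, (L m * E m * S N - L m * E m * Q N m) := (hsum1.tsum_sub hsum2).symm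
    _ = ∑' m : ℤ, (L m * E m) * (S N - Q N m) := tsum_congr fun m => by ring
  have hest : ∀ (N : ℕ) (m : ℤ),
      ‖S N - Q N m‖ ≤ 2 * (m.natAbs : ℝ) * ε (((N:ℤ) + 1 - |m|).toNat) := by
    intro N m
    have hjle : ∀ k : ℤ, (N:ℤ) < |k| + |m| → ((((N:ℤ) + 1 - |m|).toNat : ℤ)) ≤ |k| := by
      intro k hk
      rcases le_or_gt ((N:ℤ) + 1 - |m|) 0 with h | h
      · rw [Int.toNat_of_nonpos h]
        exact abs_nonneg k
      · rw [Int.toNat_of_nonneg h.le]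
        linarith
    simp only [hSS, hQQ]
    rw [← Finset.sum_sdiff_sub_sum_sdiff]
    apply (norm_sub_le _ _).trans
    have hA : ‖∑ k ∈ Finset.Icc (-(N:ℤ)) (N:ℤ) \ Finset.Icc (-(N:ℤ) - m) ((N:ℤ) - m),
        d k * E k‖ ≤ (m.natAbs : ℝ) * ε (((N:ℤ) + 1 - |m|).toNat) := by
      apply (norm_sum_le _ _).trans
      apply (Finset.sum_le_card_nsmul _ _ (ε (((N:ℤ) + 1 - |m|).toNat)) ?_).trans
      · rw [nsmul_eq_mul]
        apply mul_le_mul_of_nonneg_right _ (hεb _).1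
        exact_mod_cast NullSeries.sdiff_card N m
      · intro k hk
        rw [norm_mul, hE1, mul_one]
        exact hεmem _ k (hjle k (NullSeries.sdiff_mem N m k hk))
    have hB : ‖∑ k ∈ Finset.Icc (-(N:ℤ) - m) ((N:ℤ) - m) \ Finset.Icc (-(N:ℤ)) (N:ℤ),
        d k * E k‖ ≤ (m.natAbs : ℝ) * ε (((N:ℤ) + 1 - |m|).toNat) := by
      apply (norm_sum_le _ _).trans
      apply (Finset.sum_le_card_nsmul _ _ (ε (((N:ℤ) + 1 - |m|).toNat)) ?_).trans
      · rw [nsmul_eq_mul]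
        apply mul_le_mul_of_nonneg_right _ (hεb _).1
        exact_mod_cast NullSeries.sdiff_card' N m
      · intro k hk
        rw [norm_mul, hE1, mul_one]
        exact hεmem _ k (hjle k (NullSeries.sdiff_mem' N m k hk))
    linarith [hA, hB]
  have hnatAbs : ∀ m : ℤ, ((m.natAbs : ℝ)) = |(m:ℝ)| := by
    intro m
    rw [Nat.cast_natAbs]
    push_cast
    rfl
  have hbound : ∀ (N : ℕ) (m : ℤ),
      ‖(L m * E m) * (S N - Q N m)‖ ≤ (2*(Cc+M)) * (‖L m‖ * (|(m:ℝ)| + 1)) := by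
    intro N m
    rw [norm_mul, norm_mul, hE1, mul_one]
    have h1 := hest N m
    have h2 : ε (((N:ℤ) + 1 - |m|).toNat) ≤ Cc + M := (hεb _).2
    have h3 : (0:ℝ) ≤ 2 * (m.natAbs : ℝ) := by positivity
    have h4 : ‖S N - Q N m‖ ≤ 2 * (m.natAbs : ℝ) * (Cc + M) := by
      calc ‖S N - Q N m‖ ≤ 2 * (m.natAbs : ℝ) * ε (((N:ℤ) + 1 - |m|).toNat) := h1
      _ ≤ 2 * (m.natAbs : ℝ) * (Cc + M) := by
          apply mul_le_mul_of_nonneg_left h2 h3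
    calc ‖L m‖ * ‖S N - Q N m‖ ≤ ‖L m‖ * (2 * (m.natAbs : ℝ) * (Cc + M)) :=
          mul_le_mul_of_nonneg_left h4 (norm_nonneg _)
    _ ≤ (2*(Cc+M)) * (‖L m‖ * (|(m:ℝ)| + 1)) := by
          rw [hnatAbs m]
          nlinarith [norm_nonneg (L m), abs_nonneg ((m:ℝ)), hCc0, hM0]
  have hptlim : ∀ m : ℤ, Tendsto (fun N : ℕ => (L m * E m) * (S N - Q N m)) atTop (nhds 0) := by
    intro m
    apply squeeze_zero_norm
      (a := fun N : ℕ => (‖L m‖ * (2 * (m.natAbs : ℝ))) * ε (((N:ℤ) + 1 - |m|).toNat))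
    · intro N
      rw [norm_mul, norm_mul, hE1, mul_one]
      calc ‖L m‖ * ‖S N - Q N m‖
          ≤ ‖L m‖ * (2 * (m.natAbs : ℝ) * ε (((N:ℤ) + 1 - |m|).toNat)) :=
            mul_le_mul_of_nonneg_left (hest N m) (norm_nonneg _)
      _ = (‖L m‖ * (2 * (m.natAbs : ℝ))) * ε (((N:ℤ) + 1 - |m|).toNat) := by ring
    · have hjt : Tendsto (fun N : ℕ => (((N:ℤ) + 1 - |m|)).toNat) atTop atTop := by
        apply tendsto_atTop_atTop.mpr
        intro b
        refine ⟨b + m.natAbs, fun N hN => ?_⟩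
        have h18 : (b:ℤ) + (m.natAbs : ℤ) ≤ (N:ℤ) := by exact_mod_cast hN
        have h19 : |m| = (m.natAbs : ℤ) := Int.abs_eq_natAbs m
        rw [Int.le_toNat (by omega)]
        omega
      have h20 := (hεt.comp hjt).const_mul (‖L m‖ * (2 * (m.natAbs : ℝ)))
      rw [mul_zero] at h20
      exact h20
  have hfinal : Tendsto (fun N : ℕ => ∑' m : ℤ, (L m * E m) * (S N - Q N m)) atTop (nhds 0) := by
    have h0 : (nhds (0:ℂ)) = nhds (∑' _m : ℤ, (0:ℂ)) := by rw [tsum_zero]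
    rw [h0]
    apply tendsto_tsum_of_dominated_convergence
      (bound := fun m : ℤ => (2*(Cc+M)) * (‖L m‖ * (|(m:ℝ)| + 1))) (hLw.mul_left _) hptlim
    exact Eventually.of_forall fun N m => hbound N m
  have hconc : Tendsto S atTop (nhds 0) := hfinal.congr fun N => (hkey N).symm
  exact hconc

-- (end of file)
end
end

section
/- Let G(z) = exp(−∫_𝕋 (e^{it}+z)/(e^{it}−z) dμ(t)) be the singular inner function associated to a nonzero finite positive Borel measure μ on 𝕋 singular with respect to Lebesgue measure. Then F = 1/G is holomorphic on 𝔻 and F does not belong to H²(𝔻); in fact sup_{0<r<1} ∫_𝕋 |F(re^{it})|² dt = ∞. -/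
/-!
At `z = (1 - δ) e^{iθ}` the real part of `∫ (e^{it} + z) / (e^{it} - z) dμ(t)` is the Poisson
integral of `μ`, and the Poisson kernel is at least `1 / (4δ)` on the arc of radius `δ` around `θ`.
Hence `|F(z)|² = exp (2 Re ∫ …) ≥ (μ(B(θ, δ)) / 4δ)²`, and it suffices to show that
`∫ (μ(B(θ, δ)) / δ)² dθ → ∞` as `δ → 0`. Being singular, `μ` charges some closed Lebesgue-null
set `K`. By Fubini, `∫_{K_δ} μ(B(θ, δ)) dθ = ∫ |K_δ ∩ B(x, δ)| dμ(x) ≥ 2δ μ(K)` for the closed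
`δ`-neighbourhood `K_δ` of `K`, so Cauchy–Schwarz gives `∫ (μ(B(θ, δ)) / δ)² dθ ≥ 4 μ(K)² / |K_δ|`,
and `|K_δ| → |K| = 0`.
-/

open MeasureTheory
open scoped Real

noncomputable section

open scoped ENNReal
open Complex Metric Filter Topology Set

lemma sq_integral_le_measureReal_mul_integral_sq {α : Type*} [MeasurableSpace α]
    {ν : Measure α} [IsFiniteMeasure ν] {f : α → ℝ} (hf0 : 0 ≤ᵐ[ν] f) (hf : MemLp f 2 ν) :
    (∫ x, f x ∂ν) ^ 2 ≤ ν.real univ * ∫ x, f x ^ 2 ∂ν := by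
  have h := integral_mul_le_Lp_mul_Lq_of_nonneg Real.HolderConjugate.two_two hf0
    (ae_of_all _ fun _ => zero_le_one) (by simpa using hf) (memLp_const (1 : ℝ))
  simp only [mul_one, integral_const, smul_eq_mul, Real.rpow_two, one_pow] at h
  have hI : 0 ≤ ∫ x, f x ^ 2 ∂ν := integral_nonneg fun _ => sq_nonneg _
  calc (∫ x, f x ∂ν) ^ 2 ≤ ((∫ x, f x ^ 2 ∂ν) ^ (1 / 2 : ℝ) * ν.real univ ^ (1 / 2 : ℝ)) ^ 2 :=
        pow_le_pow_left₀ (integral_nonneg_of_ae hf0) h 2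
    _ = ν.real univ * ∫ x, f x ^ 2 ∂ν := by
        rw [mul_pow, ← Real.sqrt_eq_rpow, ← Real.sqrt_eq_rpow, Real.sq_sqrt hI,
          Real.sq_sqrt measureReal_nonneg, mul_comm]

lemma tendsto_atTop_of_const_le_mul {α : Type*} {l : Filter α} {v g : α → ℝ} {c : ℝ}
    (hc : 0 < c) (hv : Tendsto v l (𝓝 0)) (hv0 : ∀ᶠ a in l, 0 ≤ v a)
    (hvg : ∀ᶠ a in l, c ≤ v a * g a) : Tendsto g l atTop := by
  refine tendsto_atTop.2 fun M => ?_
  have hsmall : ∀ᶠ a in l, v a * max M 1 < c := by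
    simpa using (hv.mul_const (max M 1)).eventually (gt_mem_nhds (by simpa using hc))
  filter_upwards [hv0, hvg, hsmall] with a ha hag ha'
  by_contra! hlt
  nlinarith [le_max_left M 1]

lemma MeasureTheory.Measure.MutuallySingular.exists_isClosed_measure_pos {X : Type*}
    [TopologicalSpace X] [MeasurableSpace X] {μ ν : Measure X} [IsFiniteMeasure μ]
    [μ.WeaklyRegular] (h : μ ⟂ₘ ν) (hμ0 : μ ≠ 0) : ∃ K, IsClosed K ∧ 0 < μ K ∧ ν K = 0 := by
  have hμc : μ h.nullSetᶜ ≠ 0 := by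
    rw [measure_compl h.measurableSet_nullSet (measure_ne_top _ _), h.measure_nullSet, tsub_zero]
    exact Measure.measure_univ_ne_zero.mpr hμ0
  obtain ⟨K, hKs, hK, hμK⟩ := h.measurableSet_nullSet.compl.exists_lt_isClosed_of_ne_top
    (measure_ne_top _ _) (pos_iff_ne_zero.mpr hμc)
  exact ⟨K, hK, hμK, measure_mono_null hKs h.measure_compl_nullSet⟩

section BallMass

variable {X : Type*} [PseudoMetricSpace X] [MeasurableSpace X] [OpensMeasurableSpace X]
  [SecondCountableTopology X]

lemma measurableSet_setOf_dist_le (δ : ℝ) : MeasurableSet {p : X × X | dist p.1 p.2 ≤ δ} :=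
  (isClosed_le continuous_dist continuous_const).measurableSet

lemma measurable_measure_closedBall (μ : Measure X) [SFinite μ] (δ : ℝ) :
    Measurable fun θ => μ (closedBall θ δ) := by
  convert measurable_measure_prodMk_left (ν := μ) (measurableSet_setOf_dist_le δ) using 3
  ext
  exact mem_closedBall'

lemma lintegral_measure_closedBall_comm (μ ν : Measure X) [SFinite μ] [SFinite ν] (δ : ℝ) :
    ∫⁻ θ, μ (closedBall θ δ) ∂ν = ∫⁻ x, ν (closedBall x δ) ∂μ := by
  have hD := measurableSet_setOf_dist_le (X := X) δ
  calc ∫⁻ θ, μ (closedBall θ δ) ∂ν = ∫⁻ θ, μ (Prod.mk θ ⁻¹' {p | dist p.1 p.2 ≤ δ}) ∂ν := by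
        congr with θ
        congr 1
        ext
        exact mem_closedBall'
    _ = ∫⁻ x, ν (closedBall x δ) ∂μ := by
        rw [← Measure.prod_apply hD, Measure.prod_apply_symm hD]
        rfl

lemma measure_mul_le_setLIntegral_measure_closedBall (μ ν : Measure X) [SFinite μ] [SFinite ν]
    {K : Set X} (hK : MeasurableSet K) {δ : ℝ} {b : ℝ≥0∞}
    (hb : ∀ x ∈ K, b ≤ ν (closedBall x δ)) :
    μ K * b ≤ ∫⁻ θ in cthickening δ K, μ (closedBall θ δ) ∂ν := by
  rw [lintegral_measure_closedBall_comm, mul_comm, ← setLIntegral_const]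
  calc ∫⁻ _ in K, b ∂μ ≤ ∫⁻ x in K, ν.restrict (cthickening δ K) (closedBall x δ) ∂μ :=
        setLIntegral_mono' hK fun x hx => by
          rw [Measure.restrict_eq_self _ (closedBall_subset_cthickening hx δ)]
          exact hb x hx
    _ ≤ _ := setLIntegral_le_lintegral _ _

lemma memLp_measureReal_closedBall (μ ν : Measure X) [IsFiniteMeasure μ] [IsFiniteMeasure ν]
    (p : ℝ≥0∞) (δ : ℝ) : MemLp (fun θ => μ.real (closedBall θ δ)) p ν :=
  .of_bound (measurable_measure_closedBall μ δ).ennreal_toReal.aestronglyMeasurable (μ.real univ)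
    (ae_of_all _ fun _ => by
      rw [Real.norm_of_nonneg measureReal_nonneg]
      exact measureReal_mono (subset_univ _))

lemma sq_measureReal_mul_le_measureReal_cthickening_mul_integral (μ ν : Measure X)
    [IsFiniteMeasure μ] [IsFiniteMeasure ν] {K : Set X} (hK : MeasurableSet K) {δ b : ℝ}
    (hb0 : 0 ≤ b) (hb : ∀ x ∈ K, b ≤ ν.real (closedBall x δ)) :
    (μ.real K * b) ^ 2 ≤
      ν.real (cthickening δ K) * ∫ θ, μ.real (closedBall θ δ) ^ 2 ∂ν := by
  set U := cthickening δ K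
  have hg := memLp_measureReal_closedBall μ (ν.restrict U) 2 δ
  have hg_int : Integrable (fun θ => μ.real (closedBall θ δ)) (ν.restrict U) :=
    (memLp_measureReal_closedBall μ _ 1 δ).integrable le_rfl
  have hmass : μ.real K * b ≤ ∫ θ in U, μ.real (closedBall θ δ) ∂ν := by
    have h := measure_mul_le_setLIntegral_measure_closedBall μ ν hK (b := .ofReal b)
      fun x hx => by
        rw [← ofReal_measureReal (measure_ne_top ν (closedBall x δ))]
        exact ENNReal.ofReal_le_ofReal (hb x hx)
    rw [← ofReal_measureReal (measure_ne_top μ K), ← ENNReal.ofReal_mul measureReal_nonneg,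
      ← lintegral_congr fun θ => ofReal_measureReal (measure_ne_top μ (closedBall θ δ)),
      ← ofReal_integral_eq_lintegral_ofReal hg_int (ae_of_all _ fun _ => measureReal_nonneg)] at h
    exact (ENNReal.ofReal_le_ofReal_iff (integral_nonneg fun _ => measureReal_nonneg)).mp h
  calc (μ.real K * b) ^ 2 ≤ (∫ θ in U, μ.real (closedBall θ δ) ∂ν) ^ 2 :=
        pow_le_pow_left₀ (mul_nonneg measureReal_nonneg hb0) hmass 2
    _ ≤ ν.real U * ∫ θ in U, μ.real (closedBall θ δ) ^ 2 ∂ν := by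
        simpa using sq_integral_le_measureReal_mul_integral_sq
          (ae_of_all _ fun _ => measureReal_nonneg) hg
    _ ≤ ν.real U * ∫ θ, μ.real (closedBall θ δ) ^ 2 ∂ν := by
        refine mul_le_mul_of_nonneg_left (setIntegral_le_integral ?_ ?_) measureReal_nonneg
        · exact (memLp_measureReal_closedBall μ ν 2 δ).integrable_sq
        · exact ae_of_all _ fun _ => sq_nonneg _

end BallMass

lemma AddCircle.volume_real_closedBall_of_le {T : ℝ} [Fact (0 < T)] (x : AddCircle T) {δ : ℝ}
    (hδ0 : 0 ≤ δ) (hδ : δ ≤ T / 2) : volume.real (closedBall x δ) = 2 * δ := by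
  rw [Measure.real, AddCircle.volume_closedBall, min_eq_right (by linarith),
    ENNReal.toReal_ofReal (by linarith)]

lemma tendsto_integral_sq_measureReal_closedBall_div {T : ℝ} [hT : Fact (0 < T)]
    (μ : Measure (AddCircle T)) [IsFiniteMeasure μ] (hμ0 : μ ≠ 0) (hsing : μ ⟂ₘ volume) :
    Tendsto (fun δ => ∫ θ, (μ.real (closedBall θ δ) / δ) ^ 2) (𝓝[>] 0) atTop := by
  obtain ⟨K, hK, hμK, hvolK⟩ := hsing.exists_isClosed_measure_pos hμ0
  have hv : Tendsto (fun δ => volume.real (cthickening δ K)) (𝓝[>] 0) (𝓝 0) := by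
    have h := tendsto_measure_cthickening_of_isClosed (μ := volume)
      ⟨1, one_pos, measure_ne_top _ _⟩ hK
    rw [hvolK] at h
    exact ((ENNReal.tendsto_toReal ENNReal.zero_ne_top).comp h).mono_left nhdsWithin_le_nhds
  have hc : 0 < (2 * μ.real K) ^ 2 := by
    have : 0 < μ.real K := ENNReal.toReal_pos hμK.ne' (measure_ne_top μ K)
    positivity
  refine tendsto_atTop_of_const_le_mul hc hv (.of_forall fun _ => measureReal_nonneg) ?_
  filter_upwards [Ioo_mem_nhdsGT (half_pos hT.out)] with δ ⟨hδ0, hδT⟩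
  have h := sq_measureReal_mul_le_measureReal_cthickening_mul_integral μ volume hK.measurableSet
    (by positivity : 0 ≤ 2 * δ)
    fun x _ => (AddCircle.volume_real_closedBall_of_le x hδ0.le hδT.le).ge
  simp_rw [div_pow, integral_div]
  rw [mul_div_assoc', le_div_iff₀ (by positivity)]
  linarith

lemma norm_fourier_apply {T : ℝ} (n : ℤ) (x : AddCircle T) : ‖fourier n x‖ = 1 :=
  Circle.norm_coe _

lemma norm_ofReal_mul_fourier {T : ℝ} (r : ℝ) (n : ℤ) (θ : AddCircle T) :
    ‖(r : ℂ) * fourier n θ‖ = |r| := by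
  rw [norm_mul, norm_fourier_apply, mul_one, norm_real, Real.norm_eq_abs]

lemma fourier_one_coe_eq_exp (t : ℝ) :
    fourier 1 (t : AddCircle (2 * π)) = exp (t * I) := by
  rw [fourier_coe_apply]
  congr 1
  push_cast
  field_simp

lemma norm_fourier_one_sub_one_le (x : AddCircle (2 * π)) : ‖fourier 1 x - 1‖ ≤ ‖x‖ := by
  induction x using QuotientAddGroup.induction_on with | H s => ?_
  -- `s - k * 2π` is the representative of `s` of least absolute value, namely `‖(s : 𝕋)‖`.
  set k := round ((2 * π)⁻¹ * s)
  have hexp : exp (s * I) = exp (I * ↑(s - k * (2 * π))) := by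
    rw [← exp_periodic.sub_int_mul_eq k]
    congr 1
    push_cast
    ring
  rw [AddCircle.norm_eq, fourier_one_coe_eq_exp, hexp, ← Real.norm_eq_abs]
  exact Real.norm_exp_I_mul_ofReal_sub_one_le

lemma dist_fourier_one_le (x y : AddCircle (2 * π)) :
    dist (fourier 1 x) (fourier 1 y) ≤ dist x y := by
  have hsplit : fourier 1 x - fourier 1 y = fourier 1 y * (fourier 1 (x - y) - 1) := by
    have : fourier 1 x = fourier 1 (x - y) * fourier 1 y := by
      simp only [fourier_one, ← Circle.coe_mul, ← AddCircle.toCircle_add, sub_add_cancel]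
    rw [this]
    ring
  rw [dist_eq_norm, dist_eq_norm, hsplit, norm_mul, norm_fourier_apply, one_mul]
  exact norm_fourier_one_sub_one_le _

lemma one_sub_norm_le_norm_sub {w : ℂ} (hw : ‖w‖ = 1) (z : ℂ) : 1 - ‖z‖ ≤ ‖w - z‖ :=
  hw ▸ norm_sub_norm_le w z

lemma fourier_one_sub_ne_zero {T : ℝ} {z : ℂ} (hz : ‖z‖ < 1) (t : AddCircle T) :
    fourier 1 t - z ≠ 0 := by
  have := one_sub_norm_le_norm_sub (norm_fourier_apply 1 t) z
  exact norm_pos_iff.mp (by linarith)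

def herglotzKernel (w z : ℂ) : ℂ := (w + z) / (w - z)

lemma re_herglotzKernel {w : ℂ} (hw : ‖w‖ = 1) (z : ℂ) :
    (herglotzKernel w z).re = (1 - ‖z‖ ^ 2) / ‖w - z‖ ^ 2 := by
  have hw' : normSq w = 1 := by rw [normSq_eq_norm_sq, hw, one_pow]
  rw [herglotzKernel, div_re, ← add_div, ← normSq_eq_norm_sq, ← normSq_eq_norm_sq]
  congr 1
  simp only [add_re, sub_re, add_im, sub_im, normSq_apply] at *
  linear_combination hw'

lemma re_herglotzKernel_nonneg {w z : ℂ} (hw : ‖w‖ = 1) (hz : ‖z‖ ≤ 1) :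
    0 ≤ (herglotzKernel w z).re := by
  rw [re_herglotzKernel hw]
  have : ‖z‖ ^ 2 ≤ 1 := pow_le_one₀ (norm_nonneg z) hz
  exact div_nonneg (by linarith) (sq_nonneg _)

lemma hasDerivAt_herglotzKernel {w z : ℂ} (hwz : w - z ≠ 0) :
    HasDerivAt (herglotzKernel w) (2 * w / (w - z) ^ 2) z := by
  have hnum : HasDerivAt (fun z => w + z) 1 z := (hasDerivAt_id' z).const_add w
  have hden : HasDerivAt (fun z => w - z) (-1) z := (hasDerivAt_id' z).const_sub w
  exact (hnum.div hden hwz).congr_deriv (by ring)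

lemma continuous_herglotzKernel_fourier {T : ℝ} {z : ℂ} (hz : ‖z‖ < 1) :
    Continuous fun t : AddCircle T => herglotzKernel (fourier 1 t) z :=
  ((fourier 1).continuous.add continuous_const).div
    ((fourier 1).continuous.sub continuous_const) (fourier_one_sub_ne_zero hz)

lemma inv_four_mul_le_re_herglotzKernel {δ : ℝ} (hδ0 : 0 < δ) (hδ1 : δ ≤ 1)
    {x θ : AddCircle (2 * π)} (hxθ : dist x θ ≤ δ) :
    1 / (4 * δ) ≤ (herglotzKernel (fourier 1 x) ((1 - δ : ℝ) * fourier 1 θ)).re := by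
  set z : ℂ := ((1 - δ : ℝ) : ℂ) * fourier 1 θ
  have hz : ‖z‖ = 1 - δ := by rw [norm_ofReal_mul_fourier, abs_of_nonneg (by linarith)]
  have hlow : δ ≤ ‖fourier 1 x - z‖ := by
    have := one_sub_norm_le_norm_sub (norm_fourier_apply 1 x) z
    linarith
  have hθz : fourier 1 θ - z = (δ : ℂ) * fourier 1 θ := by
    simp only [z]
    push_cast
    ring
  have hup : ‖fourier 1 x - z‖ ≤ 2 * δ := calc
    ‖fourier 1 x - z‖ ≤ ‖fourier 1 x - fourier 1 θ‖ + ‖fourier 1 θ - z‖ :=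
      norm_sub_le_norm_sub_add_norm_sub _ _ _
    _ ≤ δ + δ := by
      gcongr
      · exact ((dist_eq_norm _ _).symm.trans_le (dist_fourier_one_le x θ)).trans hxθ
      · rw [hθz, norm_ofReal_mul_fourier, abs_of_pos hδ0]
    _ = 2 * δ := by ring
  rw [re_herglotzKernel (norm_fourier_apply 1 x), hz,
    div_le_div_iff₀ (by positivity) (by nlinarith)]
  nlinarith [pow_le_pow_left₀ (norm_nonneg _) hup 2, mul_nonneg (sq_nonneg δ) (sub_nonneg.2 hδ1)]

def herglotzIntegral (μ : Measure (AddCircle (2 * π))) (z : ℂ) : ℂ :=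
  ∫ t, herglotzKernel (fourier 1 t) z ∂μ

section HerglotzIntegral

variable (μ : Measure (AddCircle (2 * π))) [IsFiniteMeasure μ]

lemma integrable_herglotzKernel_fourier {z : ℂ} (hz : ‖z‖ < 1) :
    Integrable (fun t => herglotzKernel (fourier 1 t) z) μ :=
  (continuous_herglotzKernel_fourier hz).integrable_of_hasCompactSupport (.of_compactSpace _)

lemma hasDerivAt_herglotzIntegral {z₀ : ℂ} (hz₀ : ‖z₀‖ < 1) :
    HasDerivAt (herglotzIntegral μ) (∫ t, 2 * fourier 1 t / (fourier 1 t - z₀) ^ 2 ∂μ) z₀ := by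
  set ε := (1 - ‖z₀‖) / 2
  have hε : 0 < ε := by simp only [ε]; linarith
  have hball : ∀ z ∈ ball z₀ ε, ε < 1 - ‖z‖ := fun z hz => by
    have := norm_le_norm_add_norm_sub' z z₀
    rw [mem_ball, dist_eq_norm] at hz
    simp only [ε] at *
    linarith
  refine (hasDerivAt_integral_of_dominated_loc_of_deriv_le (bound := fun _ => 2 / ε ^ 2)
    (F := fun z t => herglotzKernel (fourier 1 t) z)
    (F' := fun z t => 2 * fourier 1 t / (fourier 1 t - z) ^ 2) (ball_mem_nhds z₀ hε) ?_
    (integrable_herglotzKernel_fourier μ hz₀) ?_ ?_ (integrable_const _) ?_).2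
  · filter_upwards [ball_mem_nhds z₀ hε] with z hz
    exact (continuous_herglotzKernel_fourier (by linarith [hball z hz])).aestronglyMeasurable
  · exact ((continuous_const.mul (fourier 1).continuous).div
      (((fourier 1).continuous.sub continuous_const).pow 2)
      fun t => pow_ne_zero 2 (fourier_one_sub_ne_zero hz₀ t)).aestronglyMeasurable
  · refine .of_forall fun t z hz => ?_
    have hden : ε ≤ ‖fourier 1 t - z‖ :=
      (hball z hz).le.trans (one_sub_norm_le_norm_sub (norm_fourier_apply 1 t) z)
    rw [norm_div, norm_mul, norm_pow, norm_fourier_apply, Complex.norm_two, mul_one]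
    gcongr
  · exact .of_forall fun t z hz =>
      hasDerivAt_herglotzKernel (fourier_one_sub_ne_zero (by linarith [hball z hz]) t)

lemma differentiableOn_herglotzIntegral :
    DifferentiableOn ℂ (herglotzIntegral μ) (ball 0 1) := fun _ hz =>
  (hasDerivAt_herglotzIntegral μ (mem_ball_zero_iff.mp hz)).differentiableAt.differentiableWithinAt

lemma measureReal_closedBall_div_le_re_herglotzIntegral {δ : ℝ} (hδ0 : 0 < δ) (hδ1 : δ ≤ 1)
    (θ : AddCircle (2 * π)) :
    μ.real (closedBall θ δ) / (4 * δ) ≤ (herglotzIntegral μ ((1 - δ : ℝ) * fourier 1 θ)).re := by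
  set z : ℂ := ((1 - δ : ℝ) : ℂ) * fourier 1 θ
  have hz : ‖z‖ < 1 := by rw [norm_ofReal_mul_fourier, abs_of_nonneg (by linarith)]; linarith
  have hint := (integrable_herglotzKernel_fourier μ hz).re
  have hre : (herglotzIntegral μ z).re = ∫ t, (herglotzKernel (fourier 1 t) z).re ∂μ :=
    (integral_re (integrable_herglotzKernel_fourier μ hz)).symm
  rw [hre]
  calc μ.real (closedBall θ δ) / (4 * δ) = μ.real (closedBall θ δ) • (1 / (4 * δ)) := by
        rw [smul_eq_mul, mul_one_div]
    _ ≤ ∫ t in closedBall θ δ, (herglotzKernel (fourier 1 t) z).re ∂μ :=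
        setIntegral_ge_of_const_le measurableSet_closedBall (measure_ne_top _ _)
          (fun x hx => inv_four_mul_le_re_herglotzKernel hδ0 hδ1 hx) hint.integrableOn
    _ ≤ ∫ t, (herglotzKernel (fourier 1 t) z).re ∂μ :=
        setIntegral_le_integral hint
          (ae_of_all _ fun t => re_herglotzKernel_nonneg (norm_fourier_apply 1 t) hz.le)

lemma integral_sq_measureReal_closedBall_div_le {δ : ℝ} (hδ0 : 0 < δ) (hδ1 : δ < 1) :
    ∫ θ : AddCircle (2 * π), (μ.real (closedBall θ δ) / δ) ^ 2 ≤
      16 * ∫ θ : AddCircle (2 * π), ‖exp (herglotzIntegral μ ((1 - δ : ℝ) * fourier 1 θ))‖ ^ 2 := by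
  have hball (θ : AddCircle (2 * π)) : ((1 - δ : ℝ) : ℂ) * fourier 1 θ ∈ ball (0 : ℂ) 1 := by
    rw [mem_ball_zero_iff, norm_ofReal_mul_fourier, abs_of_nonneg (by linarith)]
    linarith
  have hcont : Continuous fun θ : AddCircle (2 * π) =>
      ‖exp (herglotzIntegral μ ((1 - δ : ℝ) * fourier 1 θ))‖ ^ 2 :=
    ((differentiableOn_herglotzIntegral μ).continuousOn.comp_continuous
      (continuous_const.mul (fourier 1).continuous) hball).cexp.norm.pow 2
  rw [← integral_const_mul]
  refine integral_mono_of_nonneg (ae_of_all _ fun _ => sq_nonneg _)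
    ((hcont.const_mul 16).integrable_of_hasCompactSupport (.of_compactSpace _))
    (ae_of_all _ fun θ => ?_)
  have h := measureReal_closedBall_div_le_re_herglotzIntegral μ hδ0 hδ1.le θ
  set u := (herglotzIntegral μ ((1 - δ : ℝ) * fourier 1 θ)).re
  have hg : 0 ≤ μ.real (closedBall θ δ) / (4 * δ) := by positivity
  dsimp only
  rw [norm_exp]
  calc (μ.real (closedBall θ δ) / δ) ^ 2 = 16 * (μ.real (closedBall θ δ) / (4 * δ)) ^ 2 := by
        field_simp
        ring
    _ ≤ 16 * Real.exp u ^ 2 := by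
        gcongr
        linarith [Real.add_one_le_exp u]

end HerglotzIntegral

/-- Let `G(z) = exp(−∫ (e^{it}+z)/(e^{it}−z) dμ(t))` be the singular inner function
of a nonzero finite positive measure `μ` on `𝕋` singular w.r.t. Lebesgue (Haar) measure.
Then `F = 1/G`, i.e. `F(z) = exp(∫ (e^{it}+z)/(e^{it}−z) dμ(t))`, is holomorphic on `𝔻` and
`F ∉ H²(𝔻)`: in fact `sup_{0<r<1} ∫ |F(re^{it})|² dt = ∞`. -/
theorem reciprocal_singular_inner_not_H2 (μ : Measure (AddCircle (2 * π)))
    [IsFiniteMeasure μ] (hμ0 : μ ≠ 0)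
    (hsing : μ.MutuallySingular AddCircle.haarAddCircle)
    (F : ℂ → ℂ)
    (hF : ∀ z ∈ Metric.ball (0 : ℂ) 1,
      F z = Complex.exp (∫ t, (fourier 1 t + z) / (fourier 1 t - z) ∂μ)) :
    DifferentiableOn ℂ F (Metric.ball (0 : ℂ) 1) ∧
    ¬ ∃ M : ℝ, ∀ r : ℝ, 0 < r → r < 1 →
      (∫ t in (0:ℝ)..(2 * π), ‖F (r * Complex.exp (t * Complex.I))‖ ^ 2) ≤ M := by
  refine ⟨(differentiableOn_herglotzIntegral μ).cexp.congr hF, fun ⟨M, hM⟩ => ?_⟩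
  have hsing' : μ ⟂ₘ volume := by
    rw [AddCircle.volume_eq_smul_haarAddCircle]
    exact (hsing.symm.smul _).symm
  obtain ⟨δ, hδM, hδ0, hδ1⟩ := (((tendsto_integral_sq_measureReal_closedBall_div μ hμ0
    hsing').eventually_gt_atTop (16 * M)).and (Ioo_mem_nhdsGT one_pos)).exists
  have hcircle : ∫ t in (0 : ℝ)..(2 * π), ‖F ((1 - δ : ℝ) * exp (t * I))‖ ^ 2 =
      ∫ θ : AddCircle (2 * π), ‖exp (herglotzIntegral μ ((1 - δ : ℝ) * fourier 1 θ))‖ ^ 2 := by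
    rw [← AddCircle.intervalIntegral_preimage (2 * π) 0, zero_add]
    congr with t
    have hmem : ((1 - δ : ℝ) : ℂ) * exp (t * I) ∈ ball (0 : ℂ) 1 := by
      rw [mem_ball_zero_iff, ← fourier_one_coe_eq_exp, norm_ofReal_mul_fourier,
        abs_of_nonneg (by linarith)]
      linarith
    rw [fourier_one_coe_eq_exp, hF _ hmem]
    rfl
  have hbound := hM (1 - δ) (by linarith) (by linarith)
  linarith [integral_sq_measureReal_closedBall_div_le μ hδ0 hδ1]
end
end

section
/- Let (f_n) be a sequence in L²(𝕋) and let N₁ < N₂ < ⋯ be natural numbers such that for every n: (i) |f̂_{n−1}(k)| < 1/n for all k > N_n; (ii) |\widehat{(f_n − f_{n−1})}(k)| < 2^{−n} for all 0 ≤ k ≤ N_n; (iii) ‖f_n − f_{n−1}‖₂ → 0 as n → ∞; and all f̂_n(k) = 0 for k < 0. Then sup_k |f̂_n(k) − f̂_m(k)| → 0 as n, m → ∞, i.e. (f̂_n) is uniformly Cauchy in ℓ^∞(ℤ). -/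
open MeasureTheory Filter
open scoped Real

noncomputable section

namespace CoeffsAux

lemma fourier_smul_integrable (g : AddCircle (2 * π) → ℂ)
    (hg : MemLp g 2 AddCircle.haarAddCircle) (k : ℤ) :
    Integrable (fun t : AddCircle (2 * π) => fourier (-k) t • g t)
      AddCircle.haarAddCircle := by
  have hgi : Integrable g AddCircle.haarAddCircle := hg.integrable one_le_two
  have := hgi.bdd_mul ((fourier (-k)).continuous.aestronglyMeasurable)
    (Filter.Eventually.of_forall fun t => le_of_eq (Circle.norm_coe _))
  simpa [smul_eq_mul] using this

lemma coeff_sub (g h : AddCircle (2 * π) → ℂ) (hg : MemLp g 2 AddCircle.haarAddCircle)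
    (hh : MemLp h 2 AddCircle.haarAddCircle) (k : ℤ) :
    fourierCoeff (fun t => g t - h t) k = fourierCoeff g k - fourierCoeff h k := by
  simp only [fourierCoeff, smul_sub]
  exact integral_sub (fourier_smul_integrable g hg k) (fourier_smul_integrable h hh k)

lemma coeff_le_sqrt (g : AddCircle (2 * π) → ℂ) (hg : MemLp g 2 AddCircle.haarAddCircle)
    (k : ℤ) :
    ‖fourierCoeff g k‖ ≤ Real.sqrt (∫ t, ‖g t‖ ^ 2 ∂AddCircle.haarAddCircle) := by
  have h0 : ‖fourierCoeff g k‖ ≤ ∫ t, ‖g t‖ ∂AddCircle.haarAddCircle := by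
    refine (norm_integral_le_integral_norm _).trans (le_of_eq ?_)
    refine integral_congr_ae (Filter.Eventually.of_forall fun t => ?_)
    show ‖fourier (-k) t • g t‖ = ‖g t‖
    have h1 : ‖fourier (-k) t‖ = 1 := Circle.norm_coe _
    rw [norm_smul, h1, one_mul]
  refine h0.trans ?_
  have hconj : Real.HolderConjugate 2 2 := ⟨by norm_num, by norm_num, by norm_num⟩
  have hH := integral_mul_le_Lp_mul_Lq_of_nonneg hconj
      (μ := AddCircle.haarAddCircle)
      (f := fun t => ‖g t‖) (g := fun _ => (1:ℝ))
      (Filter.Eventually.of_forall fun t => norm_nonneg (g t))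
      (Filter.Eventually.of_forall fun _ => zero_le_one)
      (by simpa using hg.norm) (by simpa using memLp_const (1:ℝ))
  simp only [mul_one] at hH
  refine hH.trans (le_of_eq ?_)
  have e1 : ∫ t, ‖g t‖ ^ (2:ℝ) ∂AddCircle.haarAddCircle
      = ∫ t, ‖g t‖ ^ 2 ∂AddCircle.haarAddCircle := by
    refine integral_congr_ae (Filter.Eventually.of_forall fun t => ?_)
    exact Real.rpow_two _
  have e2 : ∫ _ : AddCircle (2*π), (1:ℝ) ^ (2:ℝ) ∂AddCircle.haarAddCircle = 1 := by
    simp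
  rw [e1, e2, Real.one_rpow, mul_one, ← Real.sqrt_eq_rpow]


lemma geo (a : ℕ) : ∀ b : ℕ, ∑ j ∈ Finset.Ico a b, (2:ℝ) ^ (-((j:ℤ)+1)) ≤ (2:ℝ) ^ (-(a:ℤ)) := by
  have key : ∀ b : ℕ, a ≤ b →
      ∑ j ∈ Finset.Ico a b, (2:ℝ) ^ (-((j:ℤ)+1)) ≤ (2:ℝ)^(-(a:ℤ)) - (2:ℝ)^(-(b:ℤ)) := by
    intro b
    induction b with
    | zero =>
      intro h
      interval_cases a
      simp
    | succ b ih =>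
      intro hab
      rcases eq_or_lt_of_le hab with rfl | h
      · simp
      · have hb : a ≤ b := Nat.lt_succ_iff.mp h
        rw [Finset.sum_Ico_succ_top hb]
        have h2 := ih hb
        have key2 : (2:ℝ) ^ (-((b:ℤ)+1)) + (2:ℝ) ^ (-(((b+1:ℕ)):ℤ)) = (2:ℝ) ^ (-(b:ℤ)) := by
          push_cast
          rw [show -((b:ℤ)+1) = -(b:ℤ) - 1 by ring,
            zpow_sub_one₀ (by norm_num : (2:ℝ) ≠ 0)]
          ring
        linarith
  intro b
  rcases le_or_gt a b with hab | hab
  · have := key b hab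
    have h0 : (0:ℝ) ≤ (2:ℝ) ^ (-(b:ℤ)) := by positivity
    linarith
  · rw [Finset.Ico_eq_empty (by omega)]
    simp only [Finset.sum_empty]
    positivity

end CoeffsAux


open CoeffsAux in
/-- Let `(f_n) ⊆ L²(𝕋)` be analytic functions and `N₁ < N₂ < ⋯` with
(i) `|f̂_n(k)| < 1/(n+1)` for `k > N_{n+1}`; (ii) `|(f_{n+1}−f_n)^(k)| < 2^{−(n+1)}` for
`0 ≤ k ≤ N_{n+1}`; (iii) `‖f_{n+1} − f_n‖₂ → 0`. Then the sequence of coefficient functions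
`(f̂_n)` is uniformly Cauchy in `ℓ^∞(ℤ)`. -/
theorem coeffs_uniformly_cauchy
    (f : ℕ → AddCircle (2 * π) → ℂ) (N : ℕ → ℕ) (hN : StrictMono N)
    (hL2 : ∀ n, MemLp (f n) 2 AddCircle.haarAddCircle)
    (hanal : ∀ n, ∀ k : ℤ, k < 0 → fourierCoeff (f n) k = 0)
    (h1 : ∀ n : ℕ, ∀ k : ℤ, (N (n + 1) : ℤ) < k →
      ‖fourierCoeff (f n) k‖ < 1 / (n + 1))
    (h2 : ∀ n : ℕ, ∀ k : ℤ, 0 ≤ k → k ≤ (N (n + 1) : ℤ) →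
      ‖fourierCoeff (fun t => f (n + 1) t - f n t) k‖ < (2 : ℝ) ^ (-((n : ℤ) + 1)))
    (h3 : Tendsto (fun n : ℕ =>
        Real.sqrt (∫ t, ‖f (n + 1) t - f n t‖ ^ 2 ∂AddCircle.haarAddCircle))
      atTop (nhds 0)) :
    ∀ ε : ℝ, 0 < ε → ∃ M : ℕ, ∀ m n : ℕ, M ≤ m → M ≤ n →
      ∀ k : ℤ, ‖fourierCoeff (f n) k - fourierCoeff (f m) k‖ < ε := by
  intro ε hε
  have hε5 : 0 < ε / 5 := by linarith
  -- choose M₁ from h3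
  obtain ⟨M₁, hM₁⟩ := (Filter.eventually_atTop).mp
    (h3.eventually_lt_const hε5)
  -- choose M₂ with 1/(M₂+1) < ε/5
  obtain ⟨M₂, hM₂⟩ := exists_nat_one_div_lt hε5
  -- choose M₃ with 2^(-M₃) < ε/5
  obtain ⟨M₃, hM₃'⟩ := exists_pow_lt_of_lt_one hε5 (by norm_num : (1/2 : ℝ) < 1)
  have hM₃ : (2:ℝ) ^ (-(M₃:ℤ)) < ε / 5 := by
    have e : (2:ℝ) ^ (-(M₃:ℤ)) = (1/2:ℝ) ^ M₃ := by
      rw [one_div, inv_pow, ← zpow_natCast (2:ℝ) M₃, ← zpow_neg]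
    rw [e]; exact hM₃'
  set M := max M₁ (max M₂ M₃) with hMdef
  refine ⟨M, ?_⟩
  -- bounds usable for any a ≥ M
  have hinv : ∀ a : ℕ, M ≤ a → 1 / ((a:ℝ) + 1) < ε / 5 := by
    intro a ha
    have h2' : M₂ ≤ a := le_trans (le_trans (le_max_left _ _) (le_max_right _ _)) ha
    refine lt_of_le_of_lt ?_ hM₂
    apply one_div_le_one_div_of_le (by positivity)
    have : (M₂:ℝ) ≤ (a:ℝ) := by exact_mod_cast h2'
    linarith
  have hpow : ∀ a : ℕ, M ≤ a → (2:ℝ) ^ (-(a:ℤ)) < ε / 5 := by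
    intro a ha
    have h3' : M₃ ≤ a := le_trans (le_trans (le_max_right _ _) (le_max_right _ _)) ha
    refine lt_of_le_of_lt ?_ hM₃
    exact zpow_le_zpow_right₀ one_le_two (by exact_mod_cast neg_le_neg (Int.ofNat_le.mpr h3'))
  have hsqrt : ∀ a : ℕ, M ≤ a →
      Real.sqrt (∫ t, ‖f (a + 1) t - f a t‖ ^ 2 ∂AddCircle.haarAddCircle) < ε / 5 := by
    intro a ha
    exact hM₁ a (le_trans (le_max_left _ _) ha)
  -- main asymmetric claim
  suffices H : ∀ m n : ℕ, M ≤ n → n ≤ m →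
      ∀ k : ℤ, ‖fourierCoeff (f n) k - fourierCoeff (f m) k‖ < ε by
    intro m n hm hn k
    rcases le_total n m with h | h
    · exact H m n hn h k
    · rw [norm_sub_rev]; exact H n m hm h k
  intro m n hn hnm k
  rcases lt_or_ge k 0 with hk | hk0
  · rw [hanal n k hk, hanal m k hk, sub_zero, norm_zero]; exact hε
  -- telescoping bound
  have tel : ∀ a b : ℕ, a ≤ b → (∀ j : ℕ, a ≤ j → (k:ℤ) ≤ (N (j+1) : ℤ)) →
      ‖fourierCoeff (f b) k - fourierCoeff (f a) k‖ ≤ (2:ℝ) ^ (-(a:ℤ)) := by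
    intro a b hab hkN
    have e1 : fourierCoeff (f b) k - fourierCoeff (f a) k
        = ∑ j ∈ Finset.Ico a b, (fourierCoeff (f (j+1)) k - fourierCoeff (f j) k) := by
      rw [Finset.sum_Ico_eq_sub _ hab,
        Finset.sum_range_sub (fun i => fourierCoeff (f i) k),
        Finset.sum_range_sub (fun i => fourierCoeff (f i) k)]
      ring
    rw [e1]
    refine (norm_sum_le _ _).trans ((Finset.sum_le_sum ?_).trans (geo a b))
    intro j hj
    rw [← coeff_sub _ _ (hL2 (j+1)) (hL2 j)]
    exact (h2 j k hk0 (hkN j (Finset.mem_Ico.mp hj).1)).le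
  -- j₀ : least j with k ≤ N (j+1)
  have hex : ∃ j : ℕ, (k:ℤ) ≤ (N (j+1) : ℤ) := by
    refine ⟨k.toNat, ?_⟩
    have h1' : k.toNat + 1 ≤ N (k.toNat + 1) := hN.le_apply
    have : (k:ℤ) ≤ (k.toNat : ℤ) + 1 := by omega
    exact this.trans (by exact_mod_cast h1')
  set j₀ := Nat.find hex with hj₀def
  have hj₀spec : (k:ℤ) ≤ (N (j₀+1) : ℤ) := Nat.find_spec hex
  have hj₀min : ∀ j : ℕ, j < j₀ → (N (j+1) : ℤ) < k := by
    intro j hj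
    have := Nat.find_min hex hj
    omega
  have hge : ∀ j : ℕ, j₀ ≤ j → (k:ℤ) ≤ (N (j+1) : ℤ) := by
    intro j hj
    refine hj₀spec.trans ?_
    exact_mod_cast hN.monotone (Nat.succ_le_succ hj)
  rcases le_or_gt j₀ n with hcase | hcase
  · -- easy case: telescoping all the way
    calc ‖fourierCoeff (f n) k - fourierCoeff (f m) k‖
        = ‖fourierCoeff (f m) k - fourierCoeff (f n) k‖ := norm_sub_rev _ _
      _ ≤ (2:ℝ) ^ (-(n:ℤ)) := tel n m hnm (fun j hj => hge j (hcase.trans hj))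
      _ < ε / 5 := hpow n hn
      _ < ε := by linarith
  · -- n < j₀
    have hNn : (N (n+1) : ℤ) < k := hj₀min n hcase
    have hcn : ‖fourierCoeff (f n) k‖ < ε / 5 := (h1 n k hNn).trans (hinv n hn)
    rcases lt_or_ge m j₀ with hm | hm
    · -- both coefficients individually small
      have hNm : (N (m+1) : ℤ) < k := hj₀min m hm
      have hcm : ‖fourierCoeff (f m) k‖ < ε / 5 :=
        (h1 m k hNm).trans (hinv m (hn.trans hnm))
      calc ‖fourierCoeff (f n) k - fourierCoeff (f m) k‖
          ≤ ‖fourierCoeff (f n) k‖ + ‖fourierCoeff (f m) k‖ := norm_sub_le _ _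
        _ < ε := by linarith
    · -- n < j₀ ≤ m
      obtain ⟨p, hp⟩ : ∃ p, j₀ = p + 1 := ⟨j₀ - 1, by omega⟩
      have hpn : n ≤ p := by omega
      have hpM : M ≤ p := hn.trans hpn
      have hNp : (N (p+1) : ℤ) < k := hj₀min p (by omega)
      have hcp : ‖fourierCoeff (f p) k‖ < ε / 5 := (h1 p k hNp).trans (hinv p hpM)
      have hdiff : ‖fourierCoeff (f (p+1)) k - fourierCoeff (f p) k‖ < ε / 5 := by
        rw [← coeff_sub _ _ (hL2 (p+1)) (hL2 p)]
        exact (coeff_le_sqrt _ ((hL2 (p+1)).sub (hL2 p)) k).trans_lt (hsqrt p hpM)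
      have htel : ‖fourierCoeff (f m) k - fourierCoeff (f j₀) k‖ < ε / 5 := by
        refine (tel j₀ m hm (fun j hj => hge j hj)).trans_lt ?_
        refine hpow j₀ ?_
        omega
      have hid : fourierCoeff (f n) k - fourierCoeff (f m) k
          = fourierCoeff (f n) k - (fourierCoeff (f (p+1)) k - fourierCoeff (f p) k)
            - fourierCoeff (f p) k - (fourierCoeff (f m) k - fourierCoeff (f j₀) k) := by
        rw [hp]; ring
      have t1 := norm_sub_le
        (fourierCoeff (f n) k - (fourierCoeff (f (p+1)) k - fourierCoeff (f p) k)
          - fourierCoeff (f p) k)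
        (fourierCoeff (f m) k - fourierCoeff (f j₀) k)
      have t2 := norm_sub_le
        (fourierCoeff (f n) k - (fourierCoeff (f (p+1)) k - fourierCoeff (f p) k))
        (fourierCoeff (f p) k)
      have t3 := norm_sub_le (fourierCoeff (f n) k)
        (fourierCoeff (f (p+1)) k - fourierCoeff (f p) k)
      rw [hid]
      linarith
end
end
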